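/- arXiv:1904.03361 — 6 statements merged into one kernel-verified Lean document; each statement's English description precedes it below -/
import Mathlib

section
/- Let (f,g)^T be a non-vanishing solution of the homogeneous Dirac system. Then for continuous h_1, h_2, the functions u(x) = f(x) ∫_{x_0}^x ( -h_2(t)/f(t) + (p_2(t)/f^2(t)) ∫_{x_0}^t (f(s)h_1(s)+g(s)h_2(s)) ds ) dt and v(x) = g(x) ∫_{x_0}^x ( h_1(t)/g(t) + (p_1(t)/g^2(t)) ∫_{x_0}^t (f(s)h_1(s)+g(s)h_2(s)) ds ) dt satisfy the nonhomogeneous system v' + p_1 u + q v = h_1, -u' + q u + p_2 v = h_2 with u(x_0) = v(x_0) = 0. -/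
open Set intervalIntegral

/-! Variation of constants. With `F = ∫_{x₀}^x (f h₁ + g h₂)` and `U`, `V` the outer integrals,
so that `u = f U` and `v = g V`, the homogeneous equations for `f, g` give
`(U - V + F / (f g))' = 0`. Since this function vanishes at `x₀`, `f (U - V) = -F / g`, and this
identity is exactly what turns the product rule for `g V` and `f U` into the nonhomogeneous system. -/

theorem hasDerivWithinAt_integral_Icc {E : Type*} [NormedAddCommGroup E] [NormedSpace ℝ E]
    [CompleteSpace E] {a b x0 x : ℝ} {φ : ℝ → E} (hφ : ContinuousOn φ (Icc a b))
    (hx0 : x0 ∈ Icc a b) (hx : x ∈ Icc a b) :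
    HasDerivWithinAt (fun y => ∫ t in x0..y, φ t) (φ x) (Icc a b) x := by
  have : Fact (x ∈ Icc a b) := ⟨hx⟩
  exact integral_hasDerivWithinAt_right ((hφ.mono (uIcc_subset_Icc hx0 hx)).intervalIntegrable)
    (hφ.stronglyMeasurableAtFilter_nhdsWithin measurableSet_Icc x) (hφ x hx)

theorem eq_of_hasDerivWithinAt_zero_Icc {E : Type*} [NormedAddCommGroup E] [NormedSpace ℝ E]
    {a b x0 x : ℝ} {D : ℝ → E} (hD : ∀ y ∈ Icc a b, HasDerivWithinAt D 0 (Icc a b) y)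
    (hx0 : x0 ∈ Icc a b) (hx : x ∈ Icc a b) : D x = D x0 := by
  have hconst := constant_of_has_deriv_right_zero
    (fun y hy => (hD y hy).continuousWithinAt) fun y hy =>
      (hD y (Ico_subset_Icc_self hy)).mono_of_mem_nhdsWithin (Icc_mem_nhdsGE_of_mem hy)
  rw [hconst x hx, hconst x0 hx0]

section DiracSystem

variable {s : Set ℝ} {x : ℝ} {p1 p2 q h1 h2 f g F U V : ℝ → ℂ}

theorem hasDerivWithinAt_dirac_invariant
    (hf : HasDerivWithinAt f (q x * f x + p2 x * g x) s x)
    (hg : HasDerivWithinAt g (-(p1 x * f x) - q x * g x) s x)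
    (hF : HasDerivWithinAt F (f x * h1 x + g x * h2 x) s x)
    (hU : HasDerivWithinAt U (-(h2 x) / f x + p2 x / f x ^ 2 * F x) s x)
    (hV : HasDerivWithinAt V (h1 x / g x + p1 x / g x ^ 2 * F x) s x)
    (hfx : f x ≠ 0) (hgx : g x ≠ 0) :
    HasDerivWithinAt (fun y => U y - V y + F y / (f y * g y)) 0 s x := by
  have hfg : HasDerivWithinAt (fun y => f y * g y) _ s x := hf.mul hg
  refine ((hU.sub hV).add (hF.div hfg (mul_ne_zero hfx hgx))).congr_deriv ?_
  field_simp
  ring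

theorem hasDerivWithinAt_dirac_nonhom_fst
    (hg : HasDerivWithinAt g (-(p1 x * f x) - q x * g x) s x)
    (hV : HasDerivWithinAt V (h1 x / g x + p1 x / g x ^ 2 * F x) s x)
    (hfx : f x ≠ 0) (hgx : g x ≠ 0) (hinv : U x - V x + F x / (f x * g x) = 0) :
    HasDerivWithinAt (fun y => g y * V y) (h1 x - p1 x * (f x * U x) - q x * (g x * V x)) s x := by
  refine (hg.mul hV).congr_deriv ?_
  rw [show U x = V x - F x / (f x * g x) by linear_combination hinv]
  field_simp
  ring

theorem hasDerivWithinAt_dirac_nonhom_snd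
    (hf : HasDerivWithinAt f (q x * f x + p2 x * g x) s x)
    (hU : HasDerivWithinAt U (-(h2 x) / f x + p2 x / f x ^ 2 * F x) s x)
    (hfx : f x ≠ 0) (hgx : g x ≠ 0) (hinv : U x - V x + F x / (f x * g x) = 0) :
    HasDerivWithinAt (fun y => f y * U y) (q x * (f x * U x) + p2 x * (g x * V x) - h2 x) s x := by
  refine (hf.mul hU).congr_deriv ?_
  rw [show V x = U x + F x / (f x * g x) by linear_combination -hinv]
  field_simp
  ring

end DiracSystem

theorem nonhom_dirac_solution_general (a b x0 : ℝ) (hx0 : x0 ∈ Icc a b)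
    (p1 p2 q h1 h2 f g : ℝ → ℂ)
    (hp1 : ContinuousOn p1 (Icc a b)) (hp2 : ContinuousOn p2 (Icc a b))
    (hh1 : ContinuousOn h1 (Icc a b)) (hh2 : ContinuousOn h2 (Icc a b))
    (hf : ∀ x ∈ Icc a b, f x ≠ 0) (hg : ∀ x ∈ Icc a b, g x ≠ 0)
    (hsys : ∀ x ∈ Icc a b,
      HasDerivWithinAt g (-(p1 x * f x) - q x * g x) (Icc a b) x ∧
      HasDerivWithinAt f (q x * f x + p2 x * g x) (Icc a b) x)
    (u v : ℝ → ℂ)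
    (hu : u = fun x => f x * ∫ t in x0..x,
      (-(h2 t) / f t + p2 t / f t ^ 2 * ∫ s in x0..t, (f s * h1 s + g s * h2 s)))
    (hv : v = fun x => g x * ∫ t in x0..x,
      (h1 t / g t + p1 t / g t ^ 2 * ∫ s in x0..t, (f s * h1 s + g s * h2 s))) :
    u x0 = 0 ∧ v x0 = 0 ∧ ∀ x ∈ Icc a b,
      HasDerivWithinAt v (h1 x - p1 x * u x - q x * v x) (Icc a b) x ∧
      HasDerivWithinAt u (q x * u x + p2 x * v x - h2 x) (Icc a b) x := by
  have hfc : ContinuousOn f (Icc a b) := fun x hx => (hsys x hx).2.continuousWithinAt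
  have hgc : ContinuousOn g (Icc a b) := fun x hx => (hsys x hx).1.continuousWithinAt
  set F : ℝ → ℂ := fun y => ∫ s in x0..y, (f s * h1 s + g s * h2 s)
  have hF x (hx : x ∈ Icc a b) : HasDerivWithinAt F (f x * h1 x + g x * h2 x) _ x :=
    hasDerivWithinAt_integral_Icc ((hfc.mul hh1).add (hgc.mul hh2)) hx0 hx
  have hFc : ContinuousOn F (Icc a b) := fun x hx => (hF x hx).continuousWithinAt
  set U : ℝ → ℂ := fun y => ∫ t in x0..y, (-(h2 t) / f t + p2 t / f t ^ 2 * F t)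
  set V : ℝ → ℂ := fun y => ∫ t in x0..y, (h1 t / g t + p1 t / g t ^ 2 * F t)
  have hU x (hx : x ∈ Icc a b) : HasDerivWithinAt U _ _ x := hasDerivWithinAt_integral_Icc
    ((hh2.neg.div hfc hf).add ((hp2.div (hfc.pow 2) fun y hy => pow_ne_zero 2 (hf y hy)).mul hFc))
    hx0 hx
  have hV x (hx : x ∈ Icc a b) : HasDerivWithinAt V _ _ x := hasDerivWithinAt_integral_Icc
    ((hh1.div hgc hg).add ((hp1.div (hgc.pow 2) fun y hy => pow_ne_zero 2 (hg y hy)).mul hFc))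
    hx0 hx
  have hinv x (hx : x ∈ Icc a b) : U x - V x + F x / (f x * g x) = 0 := by
    rw [eq_of_hasDerivWithinAt_zero_Icc (fun y hy => hasDerivWithinAt_dirac_invariant (hsys y hy).2
      (hsys y hy).1 (hF y hy) (hU y hy) (hV y hy) (hf y hy) (hg y hy)) hx0 hx]
    simp [U, V, F]
  obtain rfl : u = fun x => f x * U x := hu
  obtain rfl : v = fun x => g x * V x := hv
  refine ⟨by simp [U], by simp [V], fun x hx => ⟨?_, ?_⟩⟩
  · exact hasDerivWithinAt_dirac_nonhom_fst (hsys x hx).1 (hV x hx) (hf x hx) (hg x hx) (hinv x hx)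
  · exact hasDerivWithinAt_dirac_nonhom_snd (hsys x hx).2 (hU x hx) (hf x hx) (hg x hx) (hinv x hx)

/-- explicit integral formulas solve the nonhomogeneous Dirac system
`v' + p₁ u + q v = h₁`, `-u' + q u + p₂ v = h₂` with `u(x₀) = v(x₀) = 0`. -/
theorem nonhom_dirac_solution (a b x0 : ℝ) (hx0 : x0 ∈ Icc a b)
    (p1 p2 q h1 h2 f g : ℝ → ℂ)
    (hp1 : ContinuousOn p1 (Icc a b)) (hp2 : ContinuousOn p2 (Icc a b))
    (hq : ContinuousOn q (Icc a b))
    (hh1 : ContinuousOn h1 (Icc a b)) (hh2 : ContinuousOn h2 (Icc a b))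
    (hf : ∀ x ∈ Icc a b, f x ≠ 0) (hg : ∀ x ∈ Icc a b, g x ≠ 0)
    (hsys : ∀ x ∈ Icc a b,
      HasDerivWithinAt g (-(p1 x * f x) - q x * g x) (Icc a b) x ∧
      HasDerivWithinAt f (q x * f x + p2 x * g x) (Icc a b) x)
    (u v : ℝ → ℂ)
    (hu : u = fun x => f x * ∫ t in x0..x,
      (-(h2 t) / f t + p2 t / f t ^ 2 * ∫ s in x0..t, (f s * h1 s + g s * h2 s)))
    (hv : v = fun x => g x * ∫ t in x0..x,
      (h1 t / g t + p1 t / g t ^ 2 * ∫ s in x0..t, (f s * h1 s + g s * h2 s))) :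
    u x0 = 0 ∧ v x0 = 0 ∧ ∀ x ∈ Icc a b,
      HasDerivWithinAt v (h1 x - p1 x * u x - q x * v x) (Icc a b) x ∧
      HasDerivWithinAt u (q x * u x + p2 x * v x - h2 x) (Icc a b) x :=
  nonhom_dirac_solution_general a b x0 hx0 p1 p2 q h1 h2 f g hp1 hp2 hh1 hh2 hf hg hsys u v hu hv
end

section
/- The formal powers X^{(n)}, Y^{(n)}, X̃^{(n)}, Ỹ^{(n)} defined by the SPPS recursion satisfy, for all n ≥ 0 and x ∈ [a,b], the bound max{|X^{(n)}(x)|, |Y^{(n)}(x)|, |X̃^{(n)}(x)|, |Ỹ^{(n)}(x)|} ≤ c · 2^n n! Σ_{k=0}^n C(n,k) (c_1 c_2)^k c_3^{n-k} |x-x_0|^{n+k}/(n+k)!, where c, c_1, c_2, c_3 are the max-norm constants c = max of the sup norms of the four zeroth formal powers, c_1 = max{‖f²r_{11}+g²r_{21}‖, ‖f²r_{12}+g²r_{22}‖}, c_2 = max{‖p_1/g²‖, ‖p_2/f²‖}, c_3 = max{‖r_{11} f/g‖, ‖r_{12}‖, ‖r_{21}‖, ‖r_{22} g/f‖}. -/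
/-!
The formal power of order `n + 1` is `n + 1` times an integral from `x₀` of the previous `X, Y`
(with coefficients bounded by `c₃`) and of `Z`, itself an integral of `X, Y` with coefficients
bounded by `c₁`, times a coefficient bounded by `c₂`. Hence, by induction, `|X⁽ⁿ⁾|` and `|Y⁽ⁿ⁾|` are
bounded by `Mₙ(|x - x₀|)` as soon as `Mₙ₊₁ = (n + 1)(2c₃ ∫Mₙ + 2c₁c₂ ∫∫Mₙ)`, and the stated
polynomial satisfies this recursion by `∫₀ᵗ sᵐ/m! = tᵐ⁺¹/(m+1)!` and Pascal's rule. Only pointwise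
bounds are needed along the induction: an integral of a non-integrable function is `0`, so the
estimate of the integral by the integral of the majorant holds without knowing that the formal
powers are integrable.
-/

open Set intervalIntegral MeasureTheory

/-- The SPPS formal powers `(X⁽ⁿ⁾, Y⁽ⁿ⁾)` defined by the recursion
`X⁽ⁿ⁺¹⁾ = (n+1)∫ (-r₂₁ X⁽ⁿ⁾ - r₂₂ (g/f) Y⁽ⁿ⁾ + (p₂/f²) Z⁽ⁿ⁾)`,
`Y⁽ⁿ⁺¹⁾ = (n+1)∫ (r₁₁ (f/g) X⁽ⁿ⁾ + r₁₂ Y⁽ⁿ⁾ + (p₁/g²) Z⁽ⁿ⁾)`, where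
`Z⁽ⁿ⁾ = ∫ (X⁽ⁿ⁾(f²r₁₁+g²r₂₁) + Y⁽ⁿ⁾(f²r₁₂+g²r₂₂))`. -/
noncomputable def spps (p1 p2 r11 r12 r21 r22 f g : ℝ → ℂ) (x0 : ℝ) (X0 Y0 : ℝ → ℂ) :
    ℕ → (ℝ → ℂ) × (ℝ → ℂ)
  | 0 => (X0, Y0)
  | n + 1 =>
    let X := (spps p1 p2 r11 r12 r21 r22 f g x0 X0 Y0 n).1
    let Y := (spps p1 p2 r11 r12 r21 r22 f g x0 X0 Y0 n).2
    let Z : ℝ → ℂ := fun x => ∫ s in x0..x,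
      (X s * (f s ^ 2 * r11 s + g s ^ 2 * r21 s) + Y s * (f s ^ 2 * r12 s + g s ^ 2 * r22 s))
    (fun x => (n + 1 : ℂ) * ∫ s in x0..x,
        (-(r21 s) * X s - r22 s * (g s / f s) * Y s + p2 s / f s ^ 2 * Z s),
     fun x => (n + 1 : ℂ) * ∫ s in x0..x,
        (r11 s * (f s / g s) * X s + r12 s * Y s + p1 s / g s ^ 2 * Z s))

/-- The SPPS formal power `Z⁽ⁿ⁾`. -/
noncomputable def sppsZ (p1 p2 r11 r12 r21 r22 f g : ℝ → ℂ) (x0 : ℝ) (X0 Y0 : ℝ → ℂ)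
    (n : ℕ) : ℝ → ℂ := fun x => ∫ s in x0..x,
      ((spps p1 p2 r11 r12 r21 r22 f g x0 X0 Y0 n).1 s * (f s ^ 2 * r11 s + g s ^ 2 * r21 s)
        + (spps p1 p2 r11 r12 r21 r22 f g x0 X0 Y0 n).2 s * (f s ^ 2 * r12 s + g s ^ 2 * r22 s))

/-- Initial formal power `X⁽⁰⁾(x) = f(x₀)g(x₀) ∫_{x₀}^x p₂/f²`. -/
noncomputable def sppsX0 (p2 f g : ℝ → ℂ) (x0 : ℝ) : ℝ → ℂ :=
  fun x => f x0 * g x0 * ∫ s in x0..x, p2 s / f s ^ 2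

/-- Initial formal power `Y⁽⁰⁾(x) = 1 + f(x₀)g(x₀) ∫_{x₀}^x p₁/g²`. -/
noncomputable def sppsY0 (p1 f g : ℝ → ℂ) (x0 : ℝ) : ℝ → ℂ :=
  fun x => 1 + f x0 * g x0 * ∫ s in x0..x, p1 s / g s ^ 2

/-- Initial formal power `X̃⁽⁰⁾(x) = 1 - f(x₀)g(x₀) ∫_{x₀}^x p₂/f²`. -/
noncomputable def sppsXt0 (p2 f g : ℝ → ℂ) (x0 : ℝ) : ℝ → ℂ :=
  fun x => 1 - f x0 * g x0 * ∫ s in x0..x, p2 s / f s ^ 2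

/-- Initial formal power `Ỹ⁽⁰⁾(x) = -f(x₀)g(x₀) ∫_{x₀}^x p₁/g²`. -/
noncomputable def sppsYt0 (p1 f g : ℝ → ℂ) (x0 : ℝ) : ℝ → ℂ :=
  fun x => -(f x0 * g x0) * ∫ s in x0..x, p1 s / g s ^ 2

/-- The max-norm (sup norm) of a function on `[a,b]`. -/
noncomputable def supNorm (a b : ℝ) (h : ℝ → ℂ) : ℝ :=
  sSup ((fun x => ‖h x‖) '' Icc a b)

/-- `sppsMajorant c c1 c2 c3 n 0 |x - x0|` is the right-hand side of the estimate; raising `j`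
integrates it `j` times in `t`. -/
noncomputable def sppsMajorant (c c1 c2 c3 : ℝ) (n j : ℕ) (t : ℝ) : ℝ :=
  c * 2 ^ n * (n.factorial : ℝ) * ∑ k ∈ Finset.range (n + 1),
    (n.choose k : ℝ) * (c1 * c2) ^ k * c3 ^ (n - k) * t ^ (n + k + j) / ((n + k + j).factorial : ℝ)

@[fun_prop]
theorem continuous_sppsMajorant (c c1 c2 c3 : ℝ) (n j : ℕ) :
    Continuous (sppsMajorant c c1 c2 c3 n j) := by
  unfold sppsMajorant
  fun_prop

theorem integral_uIoc_pow_abs_sub_div_factorial (x0 x : ℝ) (m : ℕ) :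
    ∫ s in uIoc x0 x, |s - x0| ^ m / (m.factorial : ℝ) =
      |x - x0| ^ (m + 1) / ((m + 1).factorial : ℝ) := by
  rw [MeasureTheory.integral_div, integral_pow_abs_sub_uIoc, Nat.factorial_succ, Nat.cast_mul,
    div_div]
  push_cast
  ring

theorem integral_uIoc_sppsMajorant (c c1 c2 c3 x0 x : ℝ) (n j : ℕ) :
    ∫ s in uIoc x0 x, sppsMajorant c c1 c2 c3 n j |s - x0| =
      sppsMajorant c c1 c2 c3 n (j + 1) |x - x0| := by
  simp only [sppsMajorant, mul_div_assoc]
  rw [MeasureTheory.integral_const_mul, MeasureTheory.integral_finsetSum]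
  · congr 1
    refine Finset.sum_congr rfl fun k _ => ?_
    rw [MeasureTheory.integral_const_mul, integral_uIoc_pow_abs_sub_div_factorial]
    rfl
  · exact fun k _ => Continuous.integrableOn_uIoc (by fun_prop)

theorem sppsMajorant_succ (c c1 c2 c3 t : ℝ) (n : ℕ) :
    sppsMajorant c c1 c2 c3 (n + 1) 0 t = (n + 1) *
      (2 * c3 * sppsMajorant c c1 c2 c3 n 1 t + 2 * c1 * c2 * sppsMajorant c c1 c2 c3 n 2 t) := by
  set F : ℕ → ℕ → ℝ :=
    fun i j => (c1 * c2) ^ i * c3 ^ j * t ^ (n + 1 + i) / (n + 1 + i).factorial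
  have h0 : sppsMajorant c c1 c2 c3 (n + 1) 0 t = c * 2 ^ (n + 1) * (n + 1).factorial *
      ∑ i ∈ Finset.range (n + 2), ((n + 1).choose i : ℝ) * F i (n + 1 - i) := by
    simp only [sppsMajorant, F, add_zero]
    congr 1
    exact Finset.sum_congr rfl fun k _ => by ring
  have h1 : c3 * sppsMajorant c c1 c2 c3 n 1 t = c * 2 ^ n * n.factorial *
      ∑ i ∈ Finset.range (n + 1), (n.choose i : ℝ) * F i (n + 1 - i) := by
    simp only [sppsMajorant, F, Finset.mul_sum]
    refine Finset.sum_congr rfl fun k hk => ?_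
    rw [Nat.sub_add_comm (Finset.mem_range_succ_iff.mp hk), pow_succ, add_right_comm n 1 k]
    ring
  have h2 : c1 * c2 * sppsMajorant c c1 c2 c3 n 2 t = c * 2 ^ n * n.factorial *
      ∑ i ∈ Finset.range (n + 1), (n.choose i : ℝ) * F (i + 1) (n - i) := by
    simp only [sppsMajorant, F, Finset.mul_sum]
    refine Finset.sum_congr rfl fun k hk => ?_
    rw [show n + 1 + (k + 1) = n + k + 2 by omega]
    ring
  rw [h0, Finset.sum_choose_succ_mul, Nat.factorial_succ]
  push_cast
  linear_combination -(2 * ((n : ℝ) + 1)) * (h1 + h2)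

theorem norm_intervalIntegral_le_integral_uIoc {E : Type*} [NormedAddCommGroup E]
    [NormedSpace ℝ E] {μ : Measure ℝ} {a b : ℝ} {f : ℝ → E} {φ : ℝ → ℝ}
    (hφ : IntegrableOn φ (uIoc a b) μ) (hf : ∀ s ∈ uIoc a b, ‖f s‖ ≤ φ s) :
    ‖∫ s in a..b, f s ∂μ‖ ≤ ∫ s in uIoc a b, φ s ∂μ := by
  rw [norm_integral_eq_norm_integral_uIoc]
  exact norm_integral_le_of_norm_le hφ (ae_restrict_of_forall_mem measurableSet_uIoc hf)

theorem norm_integral_le_sppsMajorant {E : Type*} [NormedAddCommGroup E] [NormedSpace ℝ E]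
    {h : ℝ → E} {c c1 c2 c3 x0 x α β : ℝ} {n j : ℕ}
    (hh : ∀ s ∈ uIoc x0 x, ‖h s‖ ≤
      α * sppsMajorant c c1 c2 c3 n j |s - x0| + β * sppsMajorant c c1 c2 c3 n (j + 1) |s - x0|) :
    ‖∫ s in x0..x, h s‖ ≤
      α * sppsMajorant c c1 c2 c3 n (j + 1) |x - x0| +
        β * sppsMajorant c c1 c2 c3 n (j + 2) |x - x0| := by
  refine (norm_intervalIntegral_le_integral_uIoc
    (Continuous.integrableOn_uIoc (by fun_prop)) hh).trans_eq ?_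
  rw [MeasureTheory.integral_add, MeasureTheory.integral_const_mul,
    MeasureTheory.integral_const_mul, integral_uIoc_sppsMajorant, integral_uIoc_sppsMajorant]
  all_goals exact Continuous.integrableOn_uIoc (by fun_prop)

theorem norm_succ_mul_integral_le_sppsMajorant_succ {h : ℝ → ℂ} {c c1 c2 c3 x0 x : ℝ} {n : ℕ}
    (hh : ∀ s ∈ uIoc x0 x, ‖h s‖ ≤
      2 * c3 * sppsMajorant c c1 c2 c3 n 0 |s - x0| +
        2 * c1 * c2 * sppsMajorant c c1 c2 c3 n 1 |s - x0|) :
    ‖((n : ℂ) + 1) * ∫ s in x0..x, h s‖ ≤ sppsMajorant c c1 c2 c3 (n + 1) 0 |x - x0| := by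
  rw [norm_mul, sppsMajorant_succ, ← Nat.cast_succ, Complex.norm_natCast]
  push_cast
  exact mul_le_mul_of_nonneg_left (norm_integral_le_sppsMajorant hh) (by positivity)

section Estimate

variable {p1 p2 r11 r12 r21 r22 f g X0 Y0 : ℝ → ℂ} {x0 : ℝ}

theorem spps_succ_fst_apply (n : ℕ) (x : ℝ) :
    (spps p1 p2 r11 r12 r21 r22 f g x0 X0 Y0 (n + 1)).1 x = (n + 1 : ℂ) * ∫ s in x0..x,
      (-(r21 s) * (spps p1 p2 r11 r12 r21 r22 f g x0 X0 Y0 n).1 s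
        - r22 s * (g s / f s) * (spps p1 p2 r11 r12 r21 r22 f g x0 X0 Y0 n).2 s
        + p2 s / f s ^ 2 * sppsZ p1 p2 r11 r12 r21 r22 f g x0 X0 Y0 n s) := rfl

theorem spps_succ_snd_apply (n : ℕ) (x : ℝ) :
    (spps p1 p2 r11 r12 r21 r22 f g x0 X0 Y0 (n + 1)).2 x = (n + 1 : ℂ) * ∫ s in x0..x,
      (r11 s * (f s / g s) * (spps p1 p2 r11 r12 r21 r22 f g x0 X0 Y0 n).1 s
        + r12 s * (spps p1 p2 r11 r12 r21 r22 f g x0 X0 Y0 n).2 s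
        + p1 s / g s ^ 2 * sppsZ p1 p2 r11 r12 r21 r22 f g x0 X0 Y0 n s) := rfl

variable {I : Set ℝ} {c c1 c2 c3 : ℝ}

theorem norm_spps_le_sppsMajorant (hI : I.OrdConnected) (hx0 : x0 ∈ I)
    (hA1 : ∀ x ∈ I, ‖f x ^ 2 * r11 x + g x ^ 2 * r21 x‖ ≤ c1)
    (hA2 : ∀ x ∈ I, ‖f x ^ 2 * r12 x + g x ^ 2 * r22 x‖ ≤ c1)
    (hP1 : ∀ x ∈ I, ‖p1 x / g x ^ 2‖ ≤ c2) (hP2 : ∀ x ∈ I, ‖p2 x / f x ^ 2‖ ≤ c2)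
    (hR11 : ∀ x ∈ I, ‖r11 x * (f x / g x)‖ ≤ c3) (hR12 : ∀ x ∈ I, ‖r12 x‖ ≤ c3)
    (hR21 : ∀ x ∈ I, ‖r21 x‖ ≤ c3) (hR22 : ∀ x ∈ I, ‖r22 x * (g x / f x)‖ ≤ c3)
    (hX0 : ∀ x ∈ I, ‖X0 x‖ ≤ c) (hY0 : ∀ x ∈ I, ‖Y0 x‖ ≤ c) (n : ℕ) :
    ∀ x ∈ I,
      ‖(spps p1 p2 r11 r12 r21 r22 f g x0 X0 Y0 n).1 x‖ ≤ sppsMajorant c c1 c2 c3 n 0 |x - x0| ∧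
      ‖(spps p1 p2 r11 r12 r21 r22 f g x0 X0 Y0 n).2 x‖ ≤ sppsMajorant c c1 c2 c3 n 0 |x - x0| := by
  have mem : ∀ {x}, x ∈ I → ∀ s ∈ uIoc x0 x, s ∈ I :=
    fun hx _ hs => hI.uIcc_subset hx0 hx (uIoc_subset_uIcc hs)
  induction n with
  | zero =>
    intro x hx
    simpa [sppsMajorant] using ⟨hX0 x hx, hY0 x hx⟩
  | succ n ih =>
    have hZ : ∀ x ∈ I, ‖sppsZ p1 p2 r11 r12 r21 r22 f g x0 X0 Y0 n x‖ ≤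
        2 * c1 * sppsMajorant c c1 c2 c3 n 1 |x - x0| := by
      intro x hx
      refine (norm_integral_le_sppsMajorant (α := 2 * c1) (β := 0) (j := 0)
        fun s hs => ?_).trans_eq (by rw [zero_mul, add_zero])
      obtain ⟨hX, hY⟩ := ih s (mem hx s hs)
      have := norm_add_le_of_le (norm_mul_le_of_le hX (hA1 s (mem hx s hs)))
        (norm_mul_le_of_le hY (hA2 s (mem hx s hs)))
      linarith
    refine fun x hx => ⟨?_, ?_⟩
    · rw [spps_succ_fst_apply]
      refine norm_succ_mul_integral_le_sppsMajorant_succ fun s hs => ?_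
      obtain ⟨hX, hY⟩ := ih s (mem hx s hs)
      have := norm_add_le_of_le
        (norm_sub_le_of_le
          (norm_mul_le_of_le ((norm_neg _).trans_le (hR21 s (mem hx s hs))) hX)
          (norm_mul_le_of_le (hR22 s (mem hx s hs)) hY))
        (norm_mul_le_of_le (hP2 s (mem hx s hs)) (hZ s (mem hx s hs)))
      linarith
    · rw [spps_succ_snd_apply]
      refine norm_succ_mul_integral_le_sppsMajorant_succ fun s hs => ?_
      obtain ⟨hX, hY⟩ := ih s (mem hx s hs)
      have := norm_add_le_of_le
        (norm_add_le_of_le (norm_mul_le_of_le (hR11 s (mem hx s hs)) hX)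
          (norm_mul_le_of_le (hR12 s (mem hx s hs)) hY))
        (norm_mul_le_of_le (hP1 s (mem hx s hs)) (hZ s (mem hx s hs)))
      linarith

end Estimate

theorem norm_le_supNorm {a b x : ℝ} {h : ℝ → ℂ} (hh : ContinuousOn h (Icc a b))
    (hx : x ∈ Icc a b) : ‖h x‖ ≤ supNorm a b h :=
  le_csSup (isCompact_Icc.image_of_continuousOn hh.norm).bddAbove ⟨x, hx, rfl⟩

theorem continuousOn_primitive_Icc {a b x0 : ℝ} {w : ℝ → ℂ} (hab : a ≤ b)
    (hx0 : x0 ∈ Icc a b) (hw : ContinuousOn w (Icc a b)) :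
    ContinuousOn (fun x => ∫ s in x0..x, w s) (Icc a b) := by
  rw [← uIcc_of_le hab] at hx0 ⊢
  exact continuousOn_primitive_interval' (hw.intervalIntegrable_of_Icc hab) hx0

theorem norm_spps_le_sppsMajorant_of_continuousOn {a b x0 c c1 c2 c3 : ℝ}
    {p1 p2 r11 r12 r21 r22 f g X0 Y0 : ℝ → ℂ} (hx0 : x0 ∈ Icc a b)
    (hp1 : ContinuousOn p1 (Icc a b)) (hp2 : ContinuousOn p2 (Icc a b))
    (hr11 : ContinuousOn r11 (Icc a b)) (hr12 : ContinuousOn r12 (Icc a b))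
    (hr21 : ContinuousOn r21 (Icc a b)) (hr22 : ContinuousOn r22 (Icc a b))
    (hfc : ContinuousOn f (Icc a b)) (hgc : ContinuousOn g (Icc a b))
    (hf : ∀ x ∈ Icc a b, f x ≠ 0) (hg : ∀ x ∈ Icc a b, g x ≠ 0)
    (hX0 : ContinuousOn X0 (Icc a b)) (hY0 : ContinuousOn Y0 (Icc a b))
    (hcX : supNorm a b X0 ≤ c) (hcY : supNorm a b Y0 ≤ c)
    (hc1 : c1 = max (supNorm a b (fun x => f x ^ 2 * r11 x + g x ^ 2 * r21 x))
      (supNorm a b (fun x => f x ^ 2 * r12 x + g x ^ 2 * r22 x)))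
    (hc2 : c2 = max (supNorm a b (fun x => p1 x / g x ^ 2))
      (supNorm a b (fun x => p2 x / f x ^ 2)))
    (hc3 : c3 = max (max (supNorm a b (fun x => r11 x * f x / g x)) (supNorm a b r12))
      (max (supNorm a b r21) (supNorm a b (fun x => r22 x * g x / f x)))) (n : ℕ) :
    ∀ x ∈ Icc a b,
      ‖(spps p1 p2 r11 r12 r21 r22 f g x0 X0 Y0 n).1 x‖ ≤ sppsMajorant c c1 c2 c3 n 0 |x - x0| ∧
      ‖(spps p1 p2 r11 r12 r21 r22 f g x0 X0 Y0 n).2 x‖ ≤ sppsMajorant c c1 c2 c3 n 0 |x - x0| := by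
  have hR11 : ∀ x ∈ Icc a b, ‖r11 x * (f x / g x)‖ ≤ c3 := fun x hx => by
    simpa only [hc3, mul_div_assoc] using le_max_of_le_left (le_max_of_le_left
      (norm_le_supNorm (h := fun x => r11 x * f x / g x) ((hr11.mul hfc).div hgc hg) hx))
  have hR22 : ∀ x ∈ Icc a b, ‖r22 x * (g x / f x)‖ ≤ c3 := fun x hx => by
    simpa only [hc3, mul_div_assoc] using le_max_of_le_right (le_max_of_le_right
      (norm_le_supNorm (h := fun x => r22 x * g x / f x) ((hr22.mul hgc).div hfc hf) hx))
  exact norm_spps_le_sppsMajorant ordConnected_Icc hx0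
    (fun x hx => hc1 ▸ le_max_of_le_left
      (norm_le_supNorm (((hfc.pow 2).mul hr11).add ((hgc.pow 2).mul hr21)) hx))
    (fun x hx => hc1 ▸ le_max_of_le_right
      (norm_le_supNorm (((hfc.pow 2).mul hr12).add ((hgc.pow 2).mul hr22)) hx))
    (fun x hx => hc2 ▸ le_max_of_le_left (norm_le_supNorm
      (hp1.div (hgc.pow 2) fun x hx => pow_ne_zero 2 (hg x hx)) hx))
    (fun x hx => hc2 ▸ le_max_of_le_right (norm_le_supNorm
      (hp2.div (hfc.pow 2) fun x hx => pow_ne_zero 2 (hf x hx)) hx))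
    hR11
    (fun x hx => hc3 ▸ le_max_of_le_left (le_max_of_le_right (norm_le_supNorm hr12 hx)))
    (fun x hx => hc3 ▸ le_max_of_le_right (le_max_of_le_left (norm_le_supNorm hr21 hx)))
    hR22
    (fun x hx => (norm_le_supNorm hX0 hx).trans hcX)
    (fun x hx => (norm_le_supNorm hY0 hx).trans hcY) n

theorem spps_formal_power_estimate_general (a b x0 : ℝ) (hab : a ≤ b) (hx0 : x0 ∈ Icc a b)
    (p1 p2 q r11 r12 r21 r22 f g : ℝ → ℂ)
    (hp1 : ContinuousOn p1 (Icc a b)) (hp2 : ContinuousOn p2 (Icc a b))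
    (hr11 : ContinuousOn r11 (Icc a b)) (hr12 : ContinuousOn r12 (Icc a b))
    (hr21 : ContinuousOn r21 (Icc a b)) (hr22 : ContinuousOn r22 (Icc a b))
    (hf : ∀ x ∈ Icc a b, f x ≠ 0) (hg : ∀ x ∈ Icc a b, g x ≠ 0)
    (hsys : ∀ x ∈ Icc a b,
      HasDerivWithinAt g (-(p1 x * f x) - q x * g x) (Icc a b) x ∧
      HasDerivWithinAt f (q x * f x + p2 x * g x) (Icc a b) x)
    (S St : ℕ → (ℝ → ℂ) × (ℝ → ℂ))
    (hS : S = spps p1 p2 r11 r12 r21 r22 f g x0 (sppsX0 p2 f g x0) (sppsY0 p1 f g x0))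
    (hSt : St = spps p1 p2 r11 r12 r21 r22 f g x0 (sppsXt0 p2 f g x0) (sppsYt0 p1 f g x0))
    (c c1 c2 c3 : ℝ)
    (hc : c = max (max (supNorm a b (sppsX0 p2 f g x0)) (supNorm a b (sppsY0 p1 f g x0)))
      (max (supNorm a b (sppsXt0 p2 f g x0)) (supNorm a b (sppsYt0 p1 f g x0))))
    (hc1 : c1 = max (supNorm a b (fun x => f x ^ 2 * r11 x + g x ^ 2 * r21 x))
      (supNorm a b (fun x => f x ^ 2 * r12 x + g x ^ 2 * r22 x)))
    (hc2 : c2 = max (supNorm a b (fun x => p1 x / g x ^ 2))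
      (supNorm a b (fun x => p2 x / f x ^ 2)))
    (hc3 : c3 = max (max (supNorm a b (fun x => r11 x * f x / g x)) (supNorm a b r12))
      (max (supNorm a b r21) (supNorm a b (fun x => r22 x * g x / f x)))) :
    ∀ n : ℕ, ∀ x ∈ Icc a b,
      max (max (‖(S n).1 x‖) (‖(S n).2 x‖))
          (max (‖(St n).1 x‖) (‖(St n).2 x‖))
        ≤ c * 2 ^ n * (n.factorial : ℝ) * ∑ k ∈ Finset.range (n + 1),
            (n.choose k : ℝ) * (c1 * c2) ^ k * c3 ^ (n - k) * |x - x0| ^ (n + k)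
              / ((n + k).factorial : ℝ) := by
  intro n x hx
  have hfc : ContinuousOn f (Icc a b) := fun x hx => (hsys x hx).2.continuousWithinAt
  have hgc : ContinuousOn g (Icc a b) := fun x hx => (hsys x hx).1.continuousWithinAt
  have hI1 := continuousOn_primitive_Icc hab hx0
    (hp1.div (hgc.pow 2) fun x hx => pow_ne_zero 2 (hg x hx))
  have hI2 := continuousOn_primitive_Icc hab hx0
    (hp2.div (hfc.pow 2) fun x hx => pow_ne_zero 2 (hf x hx))
  obtain ⟨hX, hY⟩ := norm_spps_le_sppsMajorant_of_continuousOn hx0 hp1 hp2 hr11 hr12 hr21 hr22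
    hfc hgc hf hg (continuousOn_const.mul hI2) (continuousOn_const.add (continuousOn_const.mul hI1))
    (hc ▸ le_max_of_le_left (le_max_left _ _)) (hc ▸ le_max_of_le_left (le_max_right _ _))
    hc1 hc2 hc3 n x hx
  obtain ⟨hXt, hYt⟩ := norm_spps_le_sppsMajorant_of_continuousOn hx0 hp1 hp2 hr11 hr12 hr21 hr22
    hfc hgc hf hg (continuousOn_const.sub (continuousOn_const.mul hI2)) (continuousOn_const.mul hI1)
    (hc ▸ le_max_of_le_right (le_max_left _ _)) (hc ▸ le_max_of_le_right (le_max_right _ _))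
    hc1 hc2 hc3 n x hx
  subst hS hSt
  exact max_le (max_le hX hY) (max_le hXt hYt)

/-- the estimate for the formal powers X⁽ⁿ⁾, Y⁽ⁿ⁾, X̃⁽ⁿ⁾, Ỹ⁽ⁿ⁾. -/
theorem spps_formal_power_estimate (a b x0 : ℝ) (hab : a ≤ b) (hx0 : x0 ∈ Icc a b)
    (p1 p2 q r11 r12 r21 r22 f g : ℝ → ℂ)
    (hp1 : ContinuousOn p1 (Icc a b)) (hp2 : ContinuousOn p2 (Icc a b))
    (hq : ContinuousOn q (Icc a b))
    (hr11 : ContinuousOn r11 (Icc a b)) (hr12 : ContinuousOn r12 (Icc a b))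
    (hr21 : ContinuousOn r21 (Icc a b)) (hr22 : ContinuousOn r22 (Icc a b))
    (hf : ∀ x ∈ Icc a b, f x ≠ 0) (hg : ∀ x ∈ Icc a b, g x ≠ 0)
    (hsys : ∀ x ∈ Icc a b,
      HasDerivWithinAt g (-(p1 x * f x) - q x * g x) (Icc a b) x ∧
      HasDerivWithinAt f (q x * f x + p2 x * g x) (Icc a b) x)
    (S St : ℕ → (ℝ → ℂ) × (ℝ → ℂ))
    (hS : S = spps p1 p2 r11 r12 r21 r22 f g x0 (sppsX0 p2 f g x0) (sppsY0 p1 f g x0))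
    (hSt : St = spps p1 p2 r11 r12 r21 r22 f g x0 (sppsXt0 p2 f g x0) (sppsYt0 p1 f g x0))
    (c c1 c2 c3 : ℝ)
    (hc : c = max (max (supNorm a b (sppsX0 p2 f g x0)) (supNorm a b (sppsY0 p1 f g x0)))
      (max (supNorm a b (sppsXt0 p2 f g x0)) (supNorm a b (sppsYt0 p1 f g x0))))
    (hc1 : c1 = max (supNorm a b (fun x => f x ^ 2 * r11 x + g x ^ 2 * r21 x))
      (supNorm a b (fun x => f x ^ 2 * r12 x + g x ^ 2 * r22 x)))
    (hc2 : c2 = max (supNorm a b (fun x => p1 x / g x ^ 2))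
      (supNorm a b (fun x => p2 x / f x ^ 2)))
    (hc3 : c3 = max (max (supNorm a b (fun x => r11 x * f x / g x)) (supNorm a b r12))
      (max (supNorm a b r21) (supNorm a b (fun x => r22 x * g x / f x)))) :
    ∀ n : ℕ, ∀ x ∈ Icc a b,
      max (max (‖(S n).1 x‖) (‖(S n).2 x‖))
          (max (‖(St n).1 x‖) (‖(St n).2 x‖))
        ≤ c * 2 ^ n * (n.factorial : ℝ) * ∑ k ∈ Finset.range (n + 1),
            (n.choose k : ℝ) * (c1 * c2) ^ k * c3 ^ (n - k) * |x - x0| ^ (n + k)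
              / ((n + k).factorial : ℝ) :=
  spps_formal_power_estimate_general a b x0 hab hx0 p1 p2 q r11 r12 r21 r22 f g hp1 hp2 hr11 hr12
    hr21 hr22 hf hg hsys S St hS hSt c c1 c2 c3 hc hc1 hc2 hc3
end

section
/- For fixed λ ∈ ℂ, the series Σ_{n=0}^∞ (λ^n/n!) (f X^{(n)}, g Y^{(n)})^T and Σ_{n=0}^∞ (λ^n/n!) (f X̃^{(n)}, g Ỹ^{(n)})^T converge uniformly on [a,b]. -/
open Set intervalIntegral MeasureTheory

theorem norm_integral_le_mul_pow_abs_sub {E : Type*} [NormedAddCommGroup E] [NormedSpace ℝ E]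
    {a b x0 x B : ℝ} {n : ℕ} {h : ℝ → E} (hx0 : x0 ∈ Icc a b) (hx : x ∈ Icc a b)
    (hh : ∀ s ∈ Icc a b, ‖h s‖ ≤ B * |s - x0| ^ n) :
    ‖∫ s in x0..x, h s‖ ≤ B * (|x - x0| ^ (n + 1) / (n + 1)) :=
  calc ‖∫ s in x0..x, h s‖ = ‖∫ s in uIoc x0 x, h s‖ := norm_intervalIntegral_eq _ _ _ _
    _ ≤ ∫ s in uIoc x0 x, B * |s - x0| ^ n :=
      norm_integral_le_of_norm_le (Continuous.integrableOn_uIoc (by fun_prop))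
        ((ae_restrict_mem measurableSet_uIoc).mono fun s hs =>
          hh s (uIcc_subset_Icc hx0 hx (uIoc_subset_uIcc hs)))
    _ = B * (|x - x0| ^ (n + 1) / (n + 1)) := by
      rw [MeasureTheory.integral_const_mul, integral_pow_abs_sub_uIoc]

theorem abs_sub_le_of_mem_Icc {a b x y : ℝ} (hx : x ∈ Icc a b) (hy : y ∈ Icc a b) :
    |x - y| ≤ b - a := by
  simpa only [Real.dist_eq] using Real.dist_le_of_mem_Icc hx hy

theorem norm_integral_le_mul_sub_mul_pow {E : Type*} [NormedAddCommGroup E] [NormedSpace ℝ E]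
    {a b x0 x B : ℝ} {n : ℕ} {h : ℝ → E} (hx0 : x0 ∈ Icc a b) (hx : x ∈ Icc a b) (hB : 0 ≤ B)
    (hh : ∀ s ∈ Icc a b, ‖h s‖ ≤ B * |s - x0| ^ n) :
    ‖∫ s in x0..x, h s‖ ≤ B * (b - a) * |x - x0| ^ n := by
  refine (norm_integral_le_mul_pow_abs_sub hx0 hx hh).trans ?_
  have hpow : |x - x0| ^ (n + 1) / (n + 1) ≤ |x - x0| ^ n * (b - a) :=
    calc |x - x0| ^ (n + 1) / (n + 1) ≤ |x - x0| ^ (n + 1) :=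
          div_le_self (by positivity) (by linarith [n.cast_nonneg (α := ℝ)])
      _ ≤ |x - x0| ^ n * (b - a) := by
          rw [pow_succ]; gcongr; exact abs_sub_le_of_mem_Icc hx hx0
  calc B * (|x - x0| ^ (n + 1) / (n + 1)) ≤ B * (|x - x0| ^ n * (b - a)) := by gcongr
    _ = B * (b - a) * |x - x0| ^ n := by ring

theorem norm_natCast_add_one_mul_integral_le {a b x0 x B : ℝ} {n : ℕ} {h : ℝ → ℂ}
    (hx0 : x0 ∈ Icc a b) (hx : x ∈ Icc a b) (hh : ∀ s ∈ Icc a b, ‖h s‖ ≤ B * |s - x0| ^ n) :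
    ‖((n : ℂ) + 1) * ∫ s in x0..x, h s‖ ≤ B * |x - x0| ^ (n + 1) := by
  have hn : ‖(n : ℂ) + 1‖ = n + 1 := by exact_mod_cast Complex.norm_natCast (n + 1)
  rw [norm_mul, hn]
  calc ((n : ℝ) + 1) * ‖∫ s in x0..x, h s‖
      ≤ (n + 1) * (B * (|x - x0| ^ (n + 1) / (n + 1))) := by
        gcongr; exact norm_integral_le_mul_pow_abs_sub hx0 hx hh
    _ = B * |x - x0| ^ (n + 1) := by field_simp

theorem norm_mul_add_mul_add_mul_le {u v w c₁ c₂ c₃ : ℂ} {K : ℝ} (h₁ : ‖c₁‖ ≤ K)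
    (h₂ : ‖c₂‖ ≤ K) (h₃ : ‖c₃‖ ≤ K) :
    ‖c₁ * u + c₂ * v + c₃ * w‖ ≤ K * ‖u‖ + K * ‖v‖ + K * ‖w‖ := by
  refine (norm_add₃_le ..).trans ?_
  simp only [norm_mul]
  gcongr

theorem norm_mul_le_of_le_mul_pow {c z : ℂ} {M A C d L : ℝ} {n : ℕ} (hc : ‖c‖ ≤ M)
    (hz : ‖z‖ ≤ A * C ^ n * d ^ n) (hA : 0 ≤ A) (hC : 0 ≤ C) (hd : 0 ≤ d) (hdL : d ≤ L) :
    ‖c * z‖ ≤ M * A * (C * L) ^ n :=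
  calc ‖c * z‖ = ‖c‖ * ‖z‖ := norm_mul c z
    _ ≤ M * (A * C ^ n * L ^ n) := by
      gcongr
      · exact (norm_nonneg c).trans hc
      · exact hz.trans (by gcongr)
    _ = M * A * (C * L) ^ n := by ring

theorem tendstoUniformlyOn_sum_pow_div_factorial_smul {α E : Type*} [NormedAddCommGroup E]
    [NormedSpace ℂ E] [CompleteSpace E] {u : ℕ → α → E} {s : Set α} {A C : ℝ}
    (hu : ∀ n, ∀ x ∈ s, ‖u n x‖ ≤ A * C ^ n) (lam : ℂ) :
    TendstoUniformlyOn (fun N x => ∑ n ∈ Finset.range N, (lam ^ n / (n.factorial : ℂ)) • u n x)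
      (fun x => ∑' n, (lam ^ n / (n.factorial : ℂ)) • u n x) Filter.atTop s := by
  refine tendstoUniformlyOn_tsum_nat
    (u := fun n => A * (‖lam‖ * C) ^ n / n.factorial) ?_ fun n x hx => ?_
  · simpa only [mul_div_assoc] using (Real.summable_pow_div_factorial _).mul_left A
  · rw [norm_smul, norm_div, norm_pow, Complex.norm_natCast]
    calc ‖lam‖ ^ n / n.factorial * ‖u n x‖ ≤ ‖lam‖ ^ n / n.factorial * (A * C ^ n) := by
          gcongr; exact hu n x hx
      _ = A * (‖lam‖ * C) ^ n / n.factorial := by ring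

-- Packed as one product so that a single bound on its (sup) norm bounds all eight coefficients
-- of the recursion.
noncomputable def sppsCoeffs (p1 p2 r11 r12 r21 r22 f g : ℝ → ℂ) (s : ℝ) :
    ℂ × ℂ × ℂ × ℂ × ℂ × ℂ × ℂ × ℂ :=
  (r21 s, r22 s * (g s / f s), p2 s / f s ^ 2, r11 s * (f s / g s), r12 s, p1 s / g s ^ 2,
    f s ^ 2 * r11 s + g s ^ 2 * r21 s, f s ^ 2 * r12 s + g s ^ 2 * r22 s)

theorem sppsCoeffs_norm_le_iff {p1 p2 r11 r12 r21 r22 f g : ℝ → ℂ} {K s : ℝ} :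
    ‖sppsCoeffs p1 p2 r11 r12 r21 r22 f g s‖ ≤ K ↔
      ‖r21 s‖ ≤ K ∧ ‖r22 s * (g s / f s)‖ ≤ K ∧ ‖p2 s / f s ^ 2‖ ≤ K ∧
      ‖r11 s * (f s / g s)‖ ≤ K ∧ ‖r12 s‖ ≤ K ∧ ‖p1 s / g s ^ 2‖ ≤ K ∧
      ‖f s ^ 2 * r11 s + g s ^ 2 * r21 s‖ ≤ K ∧ ‖f s ^ 2 * r12 s + g s ^ 2 * r22 s‖ ≤ K := by
  simp only [sppsCoeffs, Prod.norm_def, max_le_iff]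

section Spps

variable {a b x0 : ℝ} {p1 p2 r11 r12 r21 r22 f g : ℝ → ℂ}

theorem continuousOn_sppsCoeffs (hp1 : ContinuousOn p1 (Icc a b))
    (hp2 : ContinuousOn p2 (Icc a b)) (hr11 : ContinuousOn r11 (Icc a b))
    (hr12 : ContinuousOn r12 (Icc a b)) (hr21 : ContinuousOn r21 (Icc a b))
    (hr22 : ContinuousOn r22 (Icc a b)) (hfc : ContinuousOn f (Icc a b))
    (hgc : ContinuousOn g (Icc a b)) (hf : ∀ x ∈ Icc a b, f x ≠ 0)
    (hg : ∀ x ∈ Icc a b, g x ≠ 0) :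
    ContinuousOn (sppsCoeffs p1 p2 r11 r12 r21 r22 f g) (Icc a b) :=
  hr21.prodMk <| (hr22.mul (hgc.div hfc hf)).prodMk <|
    (hp2.div (hfc.pow 2) fun x hx => pow_ne_zero 2 (hf x hx)).prodMk <|
    (hr11.mul (hfc.div hgc hg)).prodMk <| hr12.prodMk <|
    (hp1.div (hgc.pow 2) fun x hx => pow_ne_zero 2 (hg x hx)).prodMk <|
    (((hfc.pow 2).mul hr11).add ((hgc.pow 2).mul hr21)).prodMk
      (((hfc.pow 2).mul hr12).add ((hgc.pow 2).mul hr22))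

theorem spps_initial_norm_le {K : ℝ} (hx0 : x0 ∈ Icc a b)
    (hp1 : ∀ s ∈ Icc a b, ‖p1 s / g s ^ 2‖ ≤ K) (hp2 : ∀ s ∈ Icc a b, ‖p2 s / f s ^ 2‖ ≤ K) :
    ∀ x ∈ Icc a b,
      let A := 1 + ‖f x0 * g x0‖ * (K * (b - a))
      (‖sppsX0 p2 f g x0 x‖ ≤ A ∧ ‖sppsY0 p1 f g x0 x‖ ≤ A) ∧
        (‖sppsXt0 p2 f g x0 x‖ ≤ A ∧ ‖sppsYt0 p1 f g x0 x‖ ≤ A) := by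
  intro x hx
  have hK0 : 0 ≤ K := (norm_nonneg _).trans (hp1 x0 hx0)
  have hprim : ∀ {h : ℝ → ℂ}, (∀ s ∈ Icc a b, ‖h s‖ ≤ K) →
      ‖f x0 * g x0 * ∫ s in x0..x, h s‖ ≤ ‖f x0 * g x0‖ * (K * (b - a)) := fun hh => by
    rw [norm_mul]
    gcongr
    simpa only [pow_zero, mul_one] using
      norm_integral_le_mul_sub_mul_pow (n := 0) hx0 hx hK0 (by simpa only [pow_zero, mul_one])
  have h₁ := hprim hp1
  have h₂ := hprim hp2
  have hle : ‖f x0 * g x0‖ * (K * (b - a)) ≤ 1 + ‖f x0 * g x0‖ * (K * (b - a)) :=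
    le_add_of_nonneg_left zero_le_one
  refine ⟨⟨h₂.trans hle, ?_⟩, ?_, ?_⟩
  · exact (norm_add_le _ _).trans (by rw [norm_one]; gcongr)
  · exact (norm_sub_le _ _).trans (by rw [norm_one]; gcongr)
  · simpa only [sppsYt0, neg_mul, norm_neg] using h₁.trans hle

theorem spps_succ_norm_le {X0 Y0 : ℝ → ℂ} {K B : ℝ} {n : ℕ} (hx0 : x0 ∈ Icc a b)
    (hK : ∀ s ∈ Icc a b, ‖sppsCoeffs p1 p2 r11 r12 r21 r22 f g s‖ ≤ K) (hB : 0 ≤ B)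
    (hn : ∀ s ∈ Icc a b, ‖(spps p1 p2 r11 r12 r21 r22 f g x0 X0 Y0 n).1 s‖ ≤ B * |s - x0| ^ n ∧
      ‖(spps p1 p2 r11 r12 r21 r22 f g x0 X0 Y0 n).2 s‖ ≤ B * |s - x0| ^ n) :
    ∀ x ∈ Icc a b,
      ‖(spps p1 p2 r11 r12 r21 r22 f g x0 X0 Y0 (n + 1)).1 x‖ ≤
        B * (2 * K + 2 * K ^ 2 * (b - a)) * |x - x0| ^ (n + 1) ∧
      ‖(spps p1 p2 r11 r12 r21 r22 f g x0 X0 Y0 (n + 1)).2 x‖ ≤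
        B * (2 * K + 2 * K ^ 2 * (b - a)) * |x - x0| ^ (n + 1) := by
  intro x hx
  set X := (spps p1 p2 r11 r12 r21 r22 f g x0 X0 Y0 n).1
  set Y := (spps p1 p2 r11 r12 r21 r22 f g x0 X0 Y0 n).2
  have hcoeff := fun s hs => sppsCoeffs_norm_le_iff.1 (hK s hs)
  have hK0 : 0 ≤ K := (norm_nonneg _).trans (hcoeff x0 hx0).1
  have hZ : ∀ s ∈ Icc a b, ‖∫ t in x0..s, (X t * (f t ^ 2 * r11 t + g t ^ 2 * r21 t) +
      Y t * (f t ^ 2 * r12 t + g t ^ 2 * r22 t))‖ ≤ 2 * K * B * (b - a) * |s - x0| ^ n := by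
    refine fun s hs => norm_integral_le_mul_sub_mul_pow hx0 hs (by positivity) fun t ht => ?_
    obtain ⟨-, -, -, -, -, -, hw₁, hw₂⟩ := hcoeff t ht
    obtain ⟨hX, hY⟩ := hn t ht
    calc _ ≤ ‖X t‖ * K + ‖Y t‖ * K := by
          refine (norm_add_le _ _).trans ?_
          simp only [norm_mul]
          gcongr
      _ ≤ B * |t - x0| ^ n * K + B * |t - x0| ^ n * K := by gcongr
      _ = 2 * K * B * |t - x0| ^ n := by ring
  constructor
  · refine norm_natCast_add_one_mul_integral_le hx0 hx fun s hs => ?_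
    obtain ⟨h₁, h₂, h₃, -⟩ := hcoeff s hs
    obtain ⟨hX, hY⟩ := hn s hs
    rw [sub_eq_add_neg, ← neg_mul]
    calc _ ≤ K * ‖X s‖ + K * ‖Y s‖ + K * _ :=
          norm_mul_add_mul_add_mul_le (by rwa [norm_neg]) (by rwa [norm_neg]) h₃
      _ ≤ K * (B * |s - x0| ^ n) + K * (B * |s - x0| ^ n) +
          K * (2 * K * B * (b - a) * |s - x0| ^ n) := by gcongr; exact hZ s hs
      _ = B * (2 * K + 2 * K ^ 2 * (b - a)) * |s - x0| ^ n := by ring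
  · refine norm_natCast_add_one_mul_integral_le hx0 hx fun s hs => ?_
    obtain ⟨-, -, -, h₁, h₂, h₃, -⟩ := hcoeff s hs
    obtain ⟨hX, hY⟩ := hn s hs
    calc _ ≤ K * ‖X s‖ + K * ‖Y s‖ + K * _ := norm_mul_add_mul_add_mul_le h₁ h₂ h₃
      _ ≤ K * (B * |s - x0| ^ n) + K * (B * |s - x0| ^ n) +
          K * (2 * K * B * (b - a) * |s - x0| ^ n) := by gcongr; exact hZ s hs
      _ = B * (2 * K + 2 * K ^ 2 * (b - a)) * |s - x0| ^ n := by ring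

theorem spps_norm_le {X0 Y0 : ℝ → ℂ} {K A : ℝ} (hx0 : x0 ∈ Icc a b)
    (hK : ∀ s ∈ Icc a b, ‖sppsCoeffs p1 p2 r11 r12 r21 r22 f g s‖ ≤ K)
    (hA : ∀ s ∈ Icc a b, ‖X0 s‖ ≤ A ∧ ‖Y0 s‖ ≤ A) (n : ℕ) :
    ∀ x ∈ Icc a b,
      ‖(spps p1 p2 r11 r12 r21 r22 f g x0 X0 Y0 n).1 x‖ ≤
        A * (2 * K + 2 * K ^ 2 * (b - a)) ^ n * |x - x0| ^ n ∧
      ‖(spps p1 p2 r11 r12 r21 r22 f g x0 X0 Y0 n).2 x‖ ≤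
        A * (2 * K + 2 * K ^ 2 * (b - a)) ^ n * |x - x0| ^ n := by
  induction n with
  | zero => simpa only [spps, pow_zero, mul_one] using hA
  | succ n ih =>
    have hA0 : 0 ≤ A := (norm_nonneg _).trans (hA x0 hx0).1
    have hK0 : 0 ≤ K := (norm_nonneg _).trans (hK x0 hx0)
    have hab : 0 ≤ b - a := sub_nonneg.2 (hx0.1.trans hx0.2)
    simpa only [pow_succ, mul_assoc] using spps_succ_norm_le hx0 hK (by positivity) ih

theorem spps_series_tendstoUniformlyOn {X0 Y0 : ℝ → ℂ} {K M A : ℝ} (hx0 : x0 ∈ Icc a b)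
    (hK : ∀ s ∈ Icc a b, ‖sppsCoeffs p1 p2 r11 r12 r21 r22 f g s‖ ≤ K)
    (hfM : ∀ s ∈ Icc a b, ‖f s‖ ≤ M) (hgM : ∀ s ∈ Icc a b, ‖g s‖ ≤ M)
    (hA : ∀ s ∈ Icc a b, ‖X0 s‖ ≤ A ∧ ‖Y0 s‖ ≤ A) (lam : ℂ) :
    TendstoUniformlyOn
      (fun N x => ∑ n ∈ Finset.range N, (lam ^ n / (n.factorial : ℂ)) •
        ((f x * (spps p1 p2 r11 r12 r21 r22 f g x0 X0 Y0 n).1 x,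
          g x * (spps p1 p2 r11 r12 r21 r22 f g x0 X0 Y0 n).2 x) : ℂ × ℂ))
      (fun x => ∑' n, (lam ^ n / (n.factorial : ℂ)) •
        ((f x * (spps p1 p2 r11 r12 r21 r22 f g x0 X0 Y0 n).1 x,
          g x * (spps p1 p2 r11 r12 r21 r22 f g x0 X0 Y0 n).2 x) : ℂ × ℂ))
      Filter.atTop (Icc a b) := by
  have hA0 : 0 ≤ A := (norm_nonneg _).trans (hA x0 hx0).1
  have hK0 : 0 ≤ K := (norm_nonneg _).trans (hK x0 hx0)
  have hab : 0 ≤ b - a := sub_nonneg.2 (hx0.1.trans hx0.2)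
  apply tendstoUniformlyOn_sum_pow_div_factorial_smul
  intro n x hx
  obtain ⟨hX, hY⟩ := spps_norm_le hx0 hK hA n x hx
  have hdist := abs_sub_le_of_mem_Icc hx hx0
  exact max_le
    (norm_mul_le_of_le_mul_pow (hfM x hx) hX hA0 (by positivity) (abs_nonneg _) hdist)
    (norm_mul_le_of_le_mul_pow (hgM x hx) hY hA0 (by positivity) (abs_nonneg _) hdist)

end Spps

theorem spps_series_uniform_convergence_general (a b x0 : ℝ) (hx0 : x0 ∈ Icc a b)
    (p1 p2 q r11 r12 r21 r22 f g : ℝ → ℂ)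
    (hp1 : ContinuousOn p1 (Icc a b)) (hp2 : ContinuousOn p2 (Icc a b))
    (hr11 : ContinuousOn r11 (Icc a b)) (hr12 : ContinuousOn r12 (Icc a b))
    (hr21 : ContinuousOn r21 (Icc a b)) (hr22 : ContinuousOn r22 (Icc a b))
    (hf : ∀ x ∈ Icc a b, f x ≠ 0) (hg : ∀ x ∈ Icc a b, g x ≠ 0)
    (hsys : ∀ x ∈ Icc a b,
      HasDerivWithinAt g (-(p1 x * f x) - q x * g x) (Icc a b) x ∧
      HasDerivWithinAt f (q x * f x + p2 x * g x) (Icc a b) x)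
    (S St : ℕ → (ℝ → ℂ) × (ℝ → ℂ))
    (hS : S = spps p1 p2 r11 r12 r21 r22 f g x0 (sppsX0 p2 f g x0) (sppsY0 p1 f g x0))
    (hSt : St = spps p1 p2 r11 r12 r21 r22 f g x0 (sppsXt0 p2 f g x0) (sppsYt0 p1 f g x0))
    (lam : ℂ) :
    ∃ S1 S2 : ℝ → ℂ × ℂ,
      TendstoUniformlyOn
        (fun N x => ∑ n ∈ Finset.range N,
          (lam ^ n / (n.factorial : ℂ)) • ((f x * (St n).1 x, g x * (St n).2 x) : ℂ × ℂ))
        S1 Filter.atTop (Icc a b) ∧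
      TendstoUniformlyOn
        (fun N x => ∑ n ∈ Finset.range N,
          (lam ^ n / (n.factorial : ℂ)) • ((f x * (S n).1 x, g x * (S n).2 x) : ℂ × ℂ))
        S2 Filter.atTop (Icc a b) := by
  subst hS hSt
  have hfc : ContinuousOn f (Icc a b) := fun x hx => (hsys x hx).2.continuousWithinAt
  have hgc : ContinuousOn g (Icc a b) := fun x hx => (hsys x hx).1.continuousWithinAt
  obtain ⟨K, hK⟩ := isCompact_Icc.exists_bound_of_continuousOn
    (continuousOn_sppsCoeffs hp1 hp2 hr11 hr12 hr21 hr22 hfc hgc hf hg)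
  obtain ⟨M, hM⟩ := isCompact_Icc.exists_bound_of_continuousOn (hfc.prodMk hgc)
  have hfM : ∀ s ∈ Icc a b, ‖f s‖ ≤ M := fun s hs => (norm_fst_le _).trans (hM s hs)
  have hgM : ∀ s ∈ Icc a b, ‖g s‖ ≤ M := fun s hs => (norm_snd_le _).trans (hM s hs)
  have hinit := spps_initial_norm_le hx0
    (fun s hs => (sppsCoeffs_norm_le_iff.1 (hK s hs)).2.2.2.2.2.1)
    (fun s hs => (sppsCoeffs_norm_le_iff.1 (hK s hs)).2.2.1)
  exact ⟨_, _, spps_series_tendstoUniformlyOn hx0 hK hfM hgM (fun s hs => (hinit s hs).2) lam,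
    spps_series_tendstoUniformlyOn hx0 hK hfM hgM (fun s hs => (hinit s hs).1) lam⟩

/-- uniform convergence of the SPPS series on [a,b]. -/
theorem spps_series_uniform_convergence (a b x0 : ℝ) (hab : a ≤ b) (hx0 : x0 ∈ Icc a b)
    (p1 p2 q r11 r12 r21 r22 f g : ℝ → ℂ)
    (hp1 : ContinuousOn p1 (Icc a b)) (hp2 : ContinuousOn p2 (Icc a b))
    (hq : ContinuousOn q (Icc a b))
    (hr11 : ContinuousOn r11 (Icc a b)) (hr12 : ContinuousOn r12 (Icc a b))
    (hr21 : ContinuousOn r21 (Icc a b)) (hr22 : ContinuousOn r22 (Icc a b))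
    (hf : ∀ x ∈ Icc a b, f x ≠ 0) (hg : ∀ x ∈ Icc a b, g x ≠ 0)
    (hsys : ∀ x ∈ Icc a b,
      HasDerivWithinAt g (-(p1 x * f x) - q x * g x) (Icc a b) x ∧
      HasDerivWithinAt f (q x * f x + p2 x * g x) (Icc a b) x)
    (S St : ℕ → (ℝ → ℂ) × (ℝ → ℂ))
    (hS : S = spps p1 p2 r11 r12 r21 r22 f g x0 (sppsX0 p2 f g x0) (sppsY0 p1 f g x0))
    (hSt : St = spps p1 p2 r11 r12 r21 r22 f g x0 (sppsXt0 p2 f g x0) (sppsYt0 p1 f g x0))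
    (lam : ℂ) :
    ∃ S1 S2 : ℝ → ℂ × ℂ,
      TendstoUniformlyOn
        (fun N x => ∑ n ∈ Finset.range N,
          (lam ^ n / (n.factorial : ℂ)) • ((f x * (St n).1 x, g x * (St n).2 x) : ℂ × ℂ))
        S1 Filter.atTop (Icc a b) ∧
      TendstoUniformlyOn
        (fun N x => ∑ n ∈ Finset.range N,
          (lam ^ n / (n.factorial : ℂ)) • ((f x * (S n).1 x, g x * (S n).2 x) : ℂ × ℂ))
        S2 Filter.atTop (Icc a b) :=
  spps_series_uniform_convergence_general a b x0 hx0 p1 p2 q r11 r12 r21 r22 f g hp1 hp2 hr11 hr12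
    hr21 hr22 hf hg hsys S St hS hSt lam
end

section
/- If the coefficients p_1, p_2, q are real-valued and (u_1,v_1)^T, (u_2,v_2)^T are two linearly independent real-valued solutions of the homogeneous Dirac system on [a,b], then the complex combination (u, v) = (u_1 + i u_2, v_1 + i v_2) has the property that both u and v are non-vanishing on [a,b]. -/
/-!
If `u₁ + i u₂` vanished at `x`, the values `(u₁ x, v₁ x)` and `(u₂ x, v₂ x)` would both lie on the
line `u = 0` of `ℝ²` and hence be linearly dependent. The Dirac system is a linear ODE
`(u, v)' = A(t) (u, v)` with continuous, hence bounded, `A`, so by uniqueness of solutions a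
real combination of the two solutions vanishing at `x` vanishes on all of `[a, b]`: the values of
linearly independent solutions stay linearly independent at every point. The same argument
applies to `v₁ + i v₂`.
-/

open Set

section LinearODE

variable {E : Type*} [NormedAddCommGroup E] [NormedSpace ℝ E] {A : ℝ → E →L[ℝ] E} {a b x : ℝ}

theorem eqOn_zero_of_hasDerivWithinAt_clm_apply (hA : ContinuousOn A (Icc a b)) {w : ℝ → E}
    (hw : ∀ t ∈ Icc a b, HasDerivWithinAt w (A t (w t)) (Icc a b) t)
    (hx : x ∈ Icc a b) (hwx : w x = 0) : EqOn w 0 (Icc a b) := by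
  obtain ⟨K, hK⟩ := isCompact_Icc.exists_bound_of_continuousOn hA
  have hlip : ∀ t ∈ Icc a b, LipschitzOnWith K.toNNReal (A t) univ := fun t ht =>
    ((A t).lipschitz.weaken
      (by rw [← norm_toNNReal]; exact Real.toNNReal_le_toNNReal (hK t ht))).lipschitzOnWith
  have hw_cont : ContinuousOn w (Icc a b) := fun t ht => (hw t ht).continuousWithinAt
  have hzero : ∀ t (s : Set ℝ), HasDerivWithinAt (fun _ => (0 : E)) (A t 0) s t := fun t s => by
    simpa using hasDerivWithinAt_const t s (0 : E)
  rw [← Icc_union_Icc_eq_Icc hx.1 hx.2]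
  refine EqOn.union ?_ ?_
  · refine ODE_solution_unique_of_mem_Icc_left (s := fun _ => univ)
      (fun t ht => hlip t ⟨ht.1.le, ht.2.trans hx.2⟩)
      (hw_cont.mono (Icc_subset_Icc_right hx.2)) (fun t ht => ?_) (fun _ _ => trivial)
      continuousOn_const (fun t _ => hzero t _) (fun _ _ => trivial) hwx
    exact (hw t ⟨ht.1.le, ht.2.trans hx.2⟩).mono_of_mem_nhdsWithin
      (Icc_mem_nhdsLE_of_mem ⟨ht.1, ht.2.trans hx.2⟩)
  · refine ODE_solution_unique_of_mem_Icc_right (s := fun _ => univ)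
      (fun t ht => hlip t ⟨hx.1.trans ht.1, ht.2.le⟩)
      (hw_cont.mono (Icc_subset_Icc_left hx.1)) (fun t ht => ?_) (fun _ _ => trivial)
      continuousOn_const (fun t _ => hzero t _) (fun _ _ => trivial) hwx
    exact (hw t ⟨hx.1.trans ht.1, ht.2.le⟩).mono_of_mem_nhdsWithin
      (Icc_mem_nhdsGE_of_mem ⟨hx.1.trans ht.1, ht.2⟩)

theorem linearIndependent_apply_of_hasDerivWithinAt_clm_apply (hA : ContinuousOn A (Icc a b))
    {ι : Type*} {W : ι → ℝ → E}
    (hW : ∀ i, ∀ t ∈ Icc a b, HasDerivWithinAt (W i) (A t (W i t)) (Icc a b) t)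
    (hLI : LinearIndependent ℝ fun i (t : Icc a b) => W i t) (hx : x ∈ Icc a b) :
    LinearIndependent ℝ fun i => W i x := by
  rw [linearIndependent_iff'] at hLI ⊢
  intro s c hcx
  refine hLI s c (funext fun t => ?_)
  have hsol : ∀ t ∈ Icc a b, HasDerivWithinAt (fun t => ∑ i ∈ s, c i • W i t)
      (A t (∑ i ∈ s, c i • W i t)) (Icc a b) t := by
    intro t ht
    simpa only [map_sum, map_smul] using
      HasDerivWithinAt.fun_sum (A := fun i t => c i • W i t) fun i _ =>
        (hW i t ht).const_smul (c i)
  simpa using eqOn_zero_of_hasDerivWithinAt_clm_apply hA hsol hx hcx t.2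

end LinearODE

theorem LinearIndependent.map_ne_zero_or_map_ne_zero_of_finrank_eq_two {K V : Type*} [Field K]
    [AddCommGroup V] [Module K V] (hV : Module.finrank K V = 2) {f : Module.Dual K V}
    (hf : f ≠ 0) {y z : V} (h : LinearIndependent K ![y, z]) : f y ≠ 0 ∨ f z ≠ 0 := by
  rw [← not_and_or]
  rintro ⟨hy, hz⟩
  have : FiniteDimensional K V := Module.finite_of_finrank_eq_succ hV
  have hker : LinearIndependent K ![(⟨y, hy⟩ : LinearMap.ker f), ⟨z, hz⟩] :=
    .of_comp (LinearMap.ker f).subtype (by convert h using 1; ext i; fin_cases i <;> rfl)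
  have hcard := hker.fintype_card_le_finrank
  have hrank := Module.Dual.finrank_ker_add_one_of_ne_zero hf
  rw [Fintype.card_fin] at hcard
  omega

theorem Complex.ofReal_add_I_mul_ofReal_ne_zero {α β : ℝ} (h : α ≠ 0 ∨ β ≠ 0) :
    (α : ℂ) + Complex.I * β ≠ 0 := by
  contrapose! h
  simpa using congr_arg (fun z : ℂ => (z.re, z.im)) h

def diracOperator (p1 p2 q : ℝ → ℝ) (t : ℝ) : ℝ × ℝ →L[ℝ] ℝ × ℝ :=
  (q t • ContinuousLinearMap.fst ℝ ℝ ℝ + p2 t • ContinuousLinearMap.snd ℝ ℝ ℝ).prod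
    (-(p1 t • ContinuousLinearMap.fst ℝ ℝ ℝ) - q t • ContinuousLinearMap.snd ℝ ℝ ℝ)

theorem continuousOn_diracOperator {p1 p2 q : ℝ → ℝ} {s : Set ℝ} (hp1 : ContinuousOn p1 s)
    (hp2 : ContinuousOn p2 s) (hq : ContinuousOn q s) :
    ContinuousOn (diracOperator p1 p2 q) s := by
  have hcomponents : ContinuousOn (fun t =>
      (q t • ContinuousLinearMap.fst ℝ ℝ ℝ + p2 t • ContinuousLinearMap.snd ℝ ℝ ℝ,
        -(p1 t • ContinuousLinearMap.fst ℝ ℝ ℝ) - q t • ContinuousLinearMap.snd ℝ ℝ ℝ)) s := by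
    fun_prop
  exact (ContinuousLinearMap.prodₗᵢ ℝ).continuous.comp_continuousOn hcomponents

theorem hasDerivWithinAt_prodMk_diracOperator {p1 p2 q u v : ℝ → ℝ} {s : Set ℝ} {x : ℝ}
    (hv : HasDerivWithinAt v (-(p1 x * u x) - q x * v x) s x)
    (hu : HasDerivWithinAt u (q x * u x + p2 x * v x) s x) :
    HasDerivWithinAt (fun t => (u t, v t)) (diracOperator p1 p2 q x (u x, v x)) s x := by
  simpa [diracOperator] using hu.prodMk hv

/-- for real-valued coefficients, if (u₁,v₁)ᵀ, (u₂,v₂)ᵀ are two linearly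
independent real solutions of the homogeneous Dirac system on [a,b], then both components
of the complex combination (u₁ + i u₂, v₁ + i v₂) are non-vanishing on [a,b]. -/
theorem complex_combination_nonvanishing (a b : ℝ) (p1 p2 q u1 v1 u2 v2 : ℝ → ℝ)
    (hp1 : ContinuousOn p1 (Icc a b)) (hp2 : ContinuousOn p2 (Icc a b))
    (hq : ContinuousOn q (Icc a b))
    (hsys1 : ∀ x ∈ Icc a b,
      HasDerivWithinAt v1 (-(p1 x * u1 x) - q x * v1 x) (Icc a b) x ∧
      HasDerivWithinAt u1 (q x * u1 x + p2 x * v1 x) (Icc a b) x)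
    (hsys2 : ∀ x ∈ Icc a b,
      HasDerivWithinAt v2 (-(p1 x * u2 x) - q x * v2 x) (Icc a b) x ∧
      HasDerivWithinAt u2 (q x * u2 x + p2 x * v2 x) (Icc a b) x)
    (hLI : LinearIndependent ℝ
      ![fun x : Icc a b => (u1 x.1, v1 x.1), fun x : Icc a b => (u2 x.1, v2 x.1)]) :
    ∀ x ∈ Icc a b,
      (u1 x : ℂ) + Complex.I * (u2 x : ℂ) ≠ 0 ∧
      (v1 x : ℂ) + Complex.I * (v2 x : ℂ) ≠ 0 := by
  intro x hx
  let W : Fin 2 → ℝ → ℝ × ℝ := ![fun t => (u1 t, v1 t), fun t => (u2 t, v2 t)]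
  have hW : ∀ i, ∀ t ∈ Icc a b,
      HasDerivWithinAt (W i) (diracOperator p1 p2 q t (W i t)) (Icc a b) t := by
    intro i t ht
    fin_cases i
    · exact hasDerivWithinAt_prodMk_diracOperator (hsys1 t ht).1 (hsys1 t ht).2
    · exact hasDerivWithinAt_prodMk_diracOperator (hsys2 t ht).1 (hsys2 t ht).2
  have hWI : (fun i (t : Icc a b) => W i t) =
      ![fun t : Icc a b => (u1 t.1, v1 t.1), fun t : Icc a b => (u2 t.1, v2 t.1)] := by
    funext i
    fin_cases i <;> rfl
  have hWx : (fun i => W i x) = ![(u1 x, v1 x), (u2 x, v2 x)] := by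
    funext i
    fin_cases i <;> rfl
  have hLIx : LinearIndependent ℝ ![(u1 x, v1 x), (u2 x, v2 x)] :=
    hWx ▸ linearIndependent_apply_of_hasDerivWithinAt_clm_apply
      (continuousOn_diracOperator hp1 hp2 hq) hW (hWI ▸ hLI) hx
  have hdim : Module.finrank ℝ (ℝ × ℝ) = 2 := by simp
  have hfst : LinearMap.fst ℝ ℝ ℝ ≠ 0 := fun h => by simpa using LinearMap.congr_fun h (1, 0)
  have hsnd : LinearMap.snd ℝ ℝ ℝ ≠ 0 := fun h => by simpa using LinearMap.congr_fun h (0, 1)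
  exact ⟨Complex.ofReal_add_I_mul_ofReal_ne_zero
      (hLIx.map_ne_zero_or_map_ne_zero_of_finrank_eq_two hdim hfst),
    Complex.ofReal_add_I_mul_ofReal_ne_zero
      (hLIx.map_ne_zero_or_map_ne_zero_of_finrank_eq_two hdim hsnd)⟩
end

section
/- For the Sturm-Liouville equation rewritten as the Dirac system v' + (u_0'/u_0) v = ω r u, -u' + (u_0'/u_0) u = -ω v/p, the pair (u_0, 1/u_0) is a non-vanishing solution of the corresponding homogeneous system (ω = 0), and the SPPS formal powers constructed from it satisfy X^{(2n)} = Y^{(2n+1)} = 0, X^{(2n-1)} = 𝒳^{(2n-1)}, Y^{(2n)} = 𝒳^{(2n)}, X̃^{(2n+1)} = Ỹ^{(2n)} = 0, X̃^{(2n)} = 𝒳̃^{(2n)}, Ỹ^{(2n+1)} = 𝒳̃^{(2n+1)}, where 𝒳^{(n)}, 𝒳̃^{(n)} are the classical Kravchenko–Porter formal powers. -/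
open Set intervalIntegral MeasureTheory

/-- The classical Kravchenko–Porter formal powers 𝒳⁽ⁿ⁾. -/
noncomputable def calX (p r u0 : ℝ → ℂ) (x0 : ℝ) : ℕ → ℝ → ℂ
  | 0 => fun _ => 1
  | n + 1 => fun x => (n + 1 : ℂ) * ∫ s in x0..x,
      calX p r u0 x0 n s *
        (if (n + 1) % 2 = 0 then u0 s ^ 2 * r s else 1 / (u0 s ^ 2 * p s))

/-- The classical Kravchenko–Porter formal powers 𝒳̃⁽ⁿ⁾ (parities interchanged). -/
noncomputable def calXt (p r u0 : ℝ → ℂ) (x0 : ℝ) : ℕ → ℝ → ℂ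
  | 0 => fun _ => 1
  | n + 1 => fun x => (n + 1 : ℂ) * ∫ s in x0..x,
      calXt p r u0 x0 n s *
        (if (n + 1) % 2 = 1 then u0 s ^ 2 * r s else 1 / (u0 s ^ 2 * p s))

/-!
With `p₁ = p₂ = r₁₂ = r₂₁ = 0` the SPPS recursion decouples into
`X⁽ⁿ⁺¹⁾ = (n+1)∫ -r₂₂ (g/f) Y⁽ⁿ⁾` and `Y⁽ⁿ⁺¹⁾ = (n+1)∫ r₁₁ (f/g) X⁽ⁿ⁾`; for `(f, g) = (u₀, 1/u₀)`,
`r₁₁ = r`, `r₂₂ = -1/p` the two weights are `1/(u₀²p)` and `u₀²r`. Each step therefore moves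
the single nonzero component to the other slot and multiplies it by the weight of the classical
recursion of matching parity, so one component vanishes identically and the other is `𝒳⁽ⁿ⁾`
(starting from `(0, 1)`) or `𝒳̃⁽ⁿ⁾` (starting from `(1, 0)`).
-/

lemma spps_succ_of_diagonal (r11 r22 f g : ℝ → ℂ) (x0 : ℝ) (X0 Y0 : ℝ → ℂ) (n : ℕ) :
    spps (fun _ => 0) (fun _ => 0) r11 (fun _ => 0) (fun _ => 0) r22 f g x0 X0 Y0 (n + 1) =
      (fun x => ((n : ℂ) + 1) * ∫ s in x0..x,
          (spps (fun _ => 0) (fun _ => 0) r11 (fun _ => 0) (fun _ => 0) r22 f g x0 X0 Y0 n).2 s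
            * -(r22 s * (g s / f s)),
        fun x => ((n : ℂ) + 1) * ∫ s in x0..x,
          (spps (fun _ => 0) (fun _ => 0) r11 (fun _ => 0) (fun _ => 0) r22 f g x0 X0 Y0 n).1 s
            * (r11 s * (f s / g s))) := by
  rw [spps]
  refine Prod.ext (funext fun x => ?_) (funext fun x => ?_) <;>
  · dsimp only
    congr 1
    refine integral_congr fun s _ => ?_
    simp only [neg_zero, zero_mul, zero_div, add_zero, zero_sub]
    ring

/-- SPPS for the Dirac form `v' + (u₀'/u₀) v = ω r u`, `-u' + (u₀'/u₀) u = -ω v/p` of the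
Sturm–Liouville equation, built from the homogeneous solution `(u₀, 1/u₀)`. -/
noncomputable abbrev sturmLiouvilleSpps (p r u0 : ℝ → ℂ) (x0 : ℝ) (X0 Y0 : ℝ → ℂ) :
    ℕ → (ℝ → ℂ) × (ℝ → ℂ) :=
  spps (fun _ => 0) (fun _ => 0) r (fun _ => 0) (fun _ => 0)
    (fun x => -(1 / p x)) u0 (fun x => (u0 x)⁻¹) x0 X0 Y0

lemma sturmLiouvilleSpps_succ (p r u0 : ℝ → ℂ) (x0 : ℝ) (X0 Y0 : ℝ → ℂ) (n : ℕ) :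
    sturmLiouvilleSpps p r u0 x0 X0 Y0 (n + 1) =
      (fun x => ((n : ℂ) + 1) * ∫ s in x0..x,
          (sturmLiouvilleSpps p r u0 x0 X0 Y0 n).2 s * (1 / (u0 s ^ 2 * p s)),
        fun x => ((n : ℂ) + 1) * ∫ s in x0..x,
          (sturmLiouvilleSpps p r u0 x0 X0 Y0 n).1 s * (u0 s ^ 2 * r s)) := by
  rw [sturmLiouvilleSpps, spps_succ_of_diagonal]
  refine Prod.ext (funext fun x => ?_) (funext fun x => ?_) <;>
  · dsimp only
    congr 1
    refine integral_congr fun s _ => ?_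
    simp only [div_eq_mul_inv, one_mul, inv_inv, mul_inv, neg_mul, neg_neg]
    ring

lemma decoupled_eq_alternating {X Y c : ℕ → ℝ → ℂ} {A B : ℝ → ℂ} {x0 : ℝ}
    (hX : ∀ n : ℕ, X (n + 1) = fun x => ((n : ℂ) + 1) * ∫ s in x0..x, Y n s * B s)
    (hY : ∀ n : ℕ, Y (n + 1) = fun x => ((n : ℂ) + 1) * ∫ s in x0..x, X n s * A s)
    (hc : ∀ n : ℕ, c (n + 1) = fun x => ((n : ℂ) + 1) * ∫ s in x0..x,
      c n s * if (n + 1) % 2 = 0 then A s else B s)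
    (hX0 : X 0 = 0) (hY0 : Y 0 = c 0) (n : ℕ) :
    (X n, Y n) = if n % 2 = 0 then (0, c n) else (c n, 0) := by
  induction n with
  | zero => simp [hX0, hY0]
  | succ n ih =>
    rw [hX, hY, hc]
    rcases Nat.mod_two_eq_zero_or_one n with hn | hn
    · have hn' : (n + 1) % 2 = 1 := by omega
      obtain ⟨hXn, hYn⟩ : X n = 0 ∧ Y n = c n := by simpa [hn] using ih
      simp [hXn, hYn, hn', Pi.zero_def]
    · have hn' : (n + 1) % 2 = 0 := by omega
      obtain ⟨hXn, hYn⟩ : X n = c n ∧ Y n = 0 := by simpa [hn] using ih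
      simp [hXn, hYn, hn', Pi.zero_def]

lemma sturmLiouvilleSpps_eq_calX (p r u0 : ℝ → ℂ) (x0 : ℝ) (n : ℕ) :
    sturmLiouvilleSpps p r u0 x0 (sppsX0 (fun _ => 0) u0 (fun x => (u0 x)⁻¹) x0)
        (sppsY0 (fun _ => 0) u0 (fun x => (u0 x)⁻¹) x0) n =
      if n % 2 = 0 then (0, calX p r u0 x0 n) else (calX p r u0 x0 n, 0) := by
  set S := sturmLiouvilleSpps p r u0 x0 (sppsX0 (fun _ => 0) u0 (fun x => (u0 x)⁻¹) x0)
    (sppsY0 (fun _ => 0) u0 (fun x => (u0 x)⁻¹) x0)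
  refine decoupled_eq_alternating (X := fun n => (S n).1) (Y := fun n => (S n).2)
    (fun n => congrArg Prod.fst (sturmLiouvilleSpps_succ ..))
    (fun _ => congrArg Prod.snd (sturmLiouvilleSpps_succ ..)) (fun _ => rfl) ?_ ?_ n
  · funext x
    simp [S, sturmLiouvilleSpps, spps, sppsX0]
  · funext x
    simp [S, sturmLiouvilleSpps, spps, sppsY0, calX]

lemma sturmLiouvilleSpps_eq_calXt (p r u0 : ℝ → ℂ) (x0 : ℝ) (n : ℕ) :
    sturmLiouvilleSpps p r u0 x0 (sppsXt0 (fun _ => 0) u0 (fun x => (u0 x)⁻¹) x0)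
        (sppsYt0 (fun _ => 0) u0 (fun x => (u0 x)⁻¹) x0) n =
      if n % 2 = 0 then (calXt p r u0 x0 n, 0) else (0, calXt p r u0 x0 n) := by
  set S := sturmLiouvilleSpps p r u0 x0 (sppsXt0 (fun _ => 0) u0 (fun x => (u0 x)⁻¹) x0)
    (sppsYt0 (fun _ => 0) u0 (fun x => (u0 x)⁻¹) x0)
  have h := decoupled_eq_alternating (X := fun n => (S n).2) (Y := fun n => (S n).1)
    (c := calXt p r u0 x0)
    (fun n => congrArg Prod.snd (sturmLiouvilleSpps_succ ..))
    (fun n => congrArg Prod.fst (sturmLiouvilleSpps_succ ..)) (fun n => ?_) ?_ ?_ n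
  · split_ifs at h ⊢ <;> exact Prod.ext (Prod.ext_iff.1 h).2 (Prod.ext_iff.1 h).1
  · funext x
    simp only [calXt]
    congr 2
    funext s
    congr 1
    split_ifs <;> first | rfl | omega
  · funext x
    simp [S, sturmLiouvilleSpps, spps, sppsYt0]
  · funext x
    simp [S, sturmLiouvilleSpps, spps, sppsXt0, calXt]

theorem spps_reduces_to_kravchenko_porter_general (a b x0 : ℝ)
    (p r u0 du0 : ℝ → ℂ)
    (hu0 : ∀ x ∈ Icc a b, u0 x ≠ 0)
    (hu0d : ∀ x ∈ Icc a b, HasDerivWithinAt u0 (du0 x) (Icc a b) x)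
    (S St : ℕ → (ℝ → ℂ) × (ℝ → ℂ))
    (hS : S = spps (fun _ => 0) (fun _ => 0) r (fun _ => 0) (fun _ => 0)
      (fun x => -(1 / p x)) u0 (fun x => (u0 x)⁻¹) x0
      (sppsX0 (fun _ => 0) u0 (fun x => (u0 x)⁻¹) x0)
      (sppsY0 (fun _ => 0) u0 (fun x => (u0 x)⁻¹) x0))
    (hSt : St = spps (fun _ => 0) (fun _ => 0) r (fun _ => 0) (fun _ => 0)
      (fun x => -(1 / p x)) u0 (fun x => (u0 x)⁻¹) x0
      (sppsXt0 (fun _ => 0) u0 (fun x => (u0 x)⁻¹) x0)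
      (sppsYt0 (fun _ => 0) u0 (fun x => (u0 x)⁻¹) x0)) :
    (∀ x ∈ Icc a b,
      u0 x ≠ 0 ∧ (u0 x)⁻¹ ≠ 0 ∧
      HasDerivWithinAt (fun t => (u0 t)⁻¹)
        (-(du0 x / u0 x * (u0 x)⁻¹)) (Icc a b) x ∧
      du0 x = du0 x / u0 x * u0 x) ∧
    (∀ n : ℕ, ∀ x ∈ Icc a b,
      (S (2 * n)).1 x = 0 ∧ (S (2 * n + 1)).2 x = 0 ∧
      (S (2 * n + 1)).1 x = calX p r u0 x0 (2 * n + 1) x ∧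
      (S (2 * n)).2 x = calX p r u0 x0 (2 * n) x ∧
      (St (2 * n + 1)).1 x = 0 ∧ (St (2 * n)).2 x = 0 ∧
      (St (2 * n)).1 x = calXt p r u0 x0 (2 * n) x ∧
      (St (2 * n + 1)).2 x = calXt p r u0 x0 (2 * n + 1) x) := by
  refine ⟨fun x hx => ⟨hu0 x hx, inv_ne_zero (hu0 x hx),
    ((hu0d x hx).inv (hu0 x hx)).congr_deriv (by ring), (div_mul_cancel₀ _ (hu0 x hx)).symm⟩,
    fun n x _ => ?_⟩
  obtain rfl : S = sturmLiouvilleSpps p r u0 x0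
      (sppsX0 (fun _ => 0) u0 (fun x => (u0 x)⁻¹) x0)
      (sppsY0 (fun _ => 0) u0 (fun x => (u0 x)⁻¹) x0) := hS
  obtain rfl : St = sturmLiouvilleSpps p r u0 x0
      (sppsXt0 (fun _ => 0) u0 (fun x => (u0 x)⁻¹) x0)
      (sppsYt0 (fun _ => 0) u0 (fun x => (u0 x)⁻¹) x0) := hSt
  simp [sturmLiouvilleSpps_eq_calX, sturmLiouvilleSpps_eq_calXt]

/-- for the Sturm-Liouville equation rewritten as a Dirac system,
(u₀, 1/u₀) is a non-vanishing solution of the homogeneous system, and the SPPS formal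
powers built from it coincide (with the stated parity pattern) with the classical
Kravchenko–Porter formal powers. -/
theorem spps_reduces_to_kravchenko_porter (a b x0 : ℝ) (hx0 : x0 ∈ Icc a b)
    (p q r u0 du0 : ℝ → ℂ)
    (hpC : ContinuousOn p (Icc a b)) (hp : ∀ x ∈ Icc a b, p x ≠ 0)
    (hqC : ContinuousOn q (Icc a b)) (hrC : ContinuousOn r (Icc a b))
    (hu0 : ∀ x ∈ Icc a b, u0 x ≠ 0)
    (hu0d : ∀ x ∈ Icc a b, HasDerivWithinAt u0 (du0 x) (Icc a b) x)
    (hu0eq : ∀ x ∈ Icc a b,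
      HasDerivWithinAt (fun t => p t * du0 t) (-(q x * u0 x)) (Icc a b) x)
    (S St : ℕ → (ℝ → ℂ) × (ℝ → ℂ))
    (hS : S = spps (fun _ => 0) (fun _ => 0) r (fun _ => 0) (fun _ => 0)
      (fun x => -(1 / p x)) u0 (fun x => (u0 x)⁻¹) x0
      (sppsX0 (fun _ => 0) u0 (fun x => (u0 x)⁻¹) x0)
      (sppsY0 (fun _ => 0) u0 (fun x => (u0 x)⁻¹) x0))
    (hSt : St = spps (fun _ => 0) (fun _ => 0) r (fun _ => 0) (fun _ => 0)
      (fun x => -(1 / p x)) u0 (fun x => (u0 x)⁻¹) x0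
      (sppsXt0 (fun _ => 0) u0 (fun x => (u0 x)⁻¹) x0)
      (sppsYt0 (fun _ => 0) u0 (fun x => (u0 x)⁻¹) x0)) :
    (∀ x ∈ Icc a b,
      u0 x ≠ 0 ∧ (u0 x)⁻¹ ≠ 0 ∧
      HasDerivWithinAt (fun t => (u0 t)⁻¹)
        (-(du0 x / u0 x * (u0 x)⁻¹)) (Icc a b) x ∧
      du0 x = du0 x / u0 x * u0 x) ∧
    (∀ n : ℕ, ∀ x ∈ Icc a b,
      (S (2 * n)).1 x = 0 ∧ (S (2 * n + 1)).2 x = 0 ∧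
      (S (2 * n + 1)).1 x = calX p r u0 x0 (2 * n + 1) x ∧
      (S (2 * n)).2 x = calX p r u0 x0 (2 * n) x ∧
      (St (2 * n + 1)).1 x = 0 ∧ (St (2 * n)).2 x = 0 ∧
      (St (2 * n)).1 x = calXt p r u0 x0 (2 * n) x ∧
      (St (2 * n + 1)).2 x = calXt p r u0 x0 (2 * n + 1) x) :=
  spps_reduces_to_kravchenko_porter_general a b x0 p r u0 du0 hu0 hu0d S St hS hSt
end

section
/- For a general first-order system 𝒫 Y' + 𝒬 Y = λ ℛ Y with 𝒫 invertible at every x, left multiplication by B 𝒫^{-1} followed by the substitution Y = exp((1/2)∫ tr(B B𝒫^{-1}𝒬) ds) U yields a system B U' + P̂ U = λ R̂ U with P̂ symmetric (tr(B P̂) ≡ 0), whose solutions are in bijective correspondence with solutions of the original system. -/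
/-!
Multiplying the system by the invertible matrix `B 𝒫⁻¹` turns it into `B Y' + Q Y = λ R Y`
without changing its solutions. Since `B² = -1`, replacing `Q` by `Q + (1/2) tr(B Q) B` kills
`tr(B Q)`, and the extra term `(1/2) tr(B Q) B U` is exactly what the derivative of the scalar
gauge factor `w = exp((1/2) ∫ tr(B Q))` contributes when `Y = w U` is substituted; dividing by
`w ≠ 0` gives the bijection.
-/

open Set intervalIntegral Matrix

theorem ContinuousOn.matrix_inv {X n K : Type*} [TopologicalSpace X] [Fintype n]
    [DecidableEq n] [Field K] [TopologicalSpace K] [IsTopologicalRing K] [ContinuousInv₀ K]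
    {A : X → Matrix n n K} {s : Set X} (hA : ContinuousOn A s)
    (hdet : ∀ x ∈ s, IsUnit (A x).det) : ContinuousOn (fun x => (A x)⁻¹) s := fun x hx =>
  (continuousAt_matrix_inv _ (by
    rw [Ring.inverse_eq_inv']
    exact continuousAt_inv₀ (hdet x hx).ne_zero)).comp_continuousWithinAt (hA x hx)

theorem ContinuousOn.integral_hasDerivWithinAt_Icc {E : Type*} [NormedAddCommGroup E]
    [NormedSpace ℝ E] [CompleteSpace E] {f : ℝ → E} {a b x₀ x : ℝ}
    (hf : ContinuousOn f (Icc a b)) (hx₀ : x₀ ∈ Icc a b) (hx : x ∈ Icc a b) :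
    HasDerivWithinAt (fun u => ∫ s in x₀..u, f s) (f x) (Icc a b) x := by
  have : Fact (x ∈ Icc a b) := ⟨hx⟩
  exact integral_hasDerivWithinAt_right (hf.mono (uIcc_subset_Icc hx₀ hx)).intervalIntegrable
    (hf.stronglyMeasurableAtFilter_nhdsWithin measurableSet_Icc x) (hf x hx)

theorem HasDerivWithinAt.inv_cexp_mul {F y : ℝ → ℂ} {F' y' : ℂ} {s : Set ℝ} {x : ℝ}
    (c : ℂ) (hF : HasDerivWithinAt F F' s x) (hy : HasDerivWithinAt y y' s x) :
    HasDerivWithinAt (fun t => (Complex.exp (c * F t))⁻¹ * y t)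
      ((Complex.exp (c * F x))⁻¹ * y' - c * F' * (Complex.exp (c * F x))⁻¹ * y x) s x := by
  simp_rw [← Complex.exp_neg]
  exact ((hF.const_mul c).neg.cexp.mul hy).congr_deriv (by simp only [Pi.neg_apply]; ring)

namespace Matrix

theorem trace_mul_add_half_trace_smul {K : Type*} [Field K] [NeZero (2 : K)]
    {B : Matrix (Fin 2) (Fin 2) K} (hB : B * B = -1) (M : Matrix (Fin 2) (Fin 2) K) :
    (B * (M + ((2 : K)⁻¹ * (B * M).trace) • B)).trace = 0 := by
  rw [Matrix.mul_add, Matrix.mul_smul, hB, trace_add, trace_smul, trace_neg, trace_one,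
    Fintype.card_fin, smul_neg, smul_eq_mul, Nat.cast_ofNat, mul_right_comm,
    inv_mul_cancel₀ two_ne_zero, one_mul, add_neg_cancel]

theorem mulVec_add_mulVec_eq_smul_mulVec_iff_mul_inv {n R : Type*} [Fintype n] [DecidableEq n]
    [CommRing R] {P B : Matrix n n R} (hP : IsUnit P.det) (hB : IsUnit B.det)
    (Q R' : Matrix n n R) (lam : R) (Y Y' : n → R) :
    P *ᵥ Y' + Q *ᵥ Y = lam • R' *ᵥ Y ↔
      B *ᵥ Y' + (B * P⁻¹ * Q) *ᵥ Y = lam • (B * P⁻¹ * R') *ᵥ Y := by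
  have hBP : IsUnit (B * P⁻¹) := by
    rw [isUnit_iff_isUnit_det, det_mul, det_nonsing_inv]
    exact hB.mul hP.ringInverse
  rw [← (mulVec_injective_of_isUnit hBP).eq_iff, mulVec_add, mulVec_smul, mulVec_mulVec,
    mulVec_mulVec, mulVec_mulVec, mul_assoc, nonsing_inv_mul _ hP, mul_one]

theorem mulVec_add_mulVec_eq_smul_mulVec_iff_gauge {n K : Type*} [Fintype n] [Field K]
    (B Q R : Matrix n n K) (lam h w : K) (hw : w ≠ 0) (Y Y' : n → K) :
    B *ᵥ Y' + Q *ᵥ Y = lam • R *ᵥ Y ↔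
      B *ᵥ (w⁻¹ • Y' - (h * w⁻¹) • Y) + (Q + h • B) *ᵥ (w⁻¹ • Y) = lam • R *ᵥ (w⁻¹ • Y) := by
  rw [← smul_right_inj (inv_ne_zero hw)]
  simp only [mulVec_sub, mulVec_smul, add_mulVec, smul_mulVec]
  constructor <;> intro hY <;> convert hY using 1 <;> module

end Matrix

theorem general_system_to_dirac_general (a b x0 : ℝ) (hx0 : x0 ∈ Icc a b) (lam : ℂ)
    (P Q R : ℝ → Matrix (Fin 2) (Fin 2) ℂ)
    (hP : ∀ i j, ContinuousOn (fun x => P x i j) (Icc a b))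
    (hQc : ∀ i j, ContinuousOn (fun x => Q x i j) (Icc a b))
    (hdet : ∀ x ∈ Icc a b, IsUnit (P x).det)
    (B : Matrix (Fin 2) (Fin 2) ℂ) (hB : B = !![0, 1; -1, 0])
    (Qm Rm Phat : ℝ → Matrix (Fin 2) (Fin 2) ℂ)
    (hQm : Qm = fun x => B * (P x)⁻¹ * Q x)
    (hRm : Rm = fun x => B * (P x)⁻¹ * R x)
    (hPhat : Phat = fun x => Qm x + ((2 : ℂ)⁻¹ * (B * Qm x).trace) • B)
    (w : ℝ → ℂ)
    (hw : w = fun x => Complex.exp ((2 : ℂ)⁻¹ * ∫ s in x0..x, (B * Qm s).trace))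
    (Y Y' U U' : ℝ → Fin 2 → ℂ)
    (hY : ∀ x ∈ Icc a b, ∀ i, HasDerivWithinAt (fun t => Y t i) (Y' x i) (Icc a b) x)
    (hU : U = fun x => (w x)⁻¹ • Y x)
    (hU' : U' = fun x =>
      (w x)⁻¹ • Y' x - ((2 : ℂ)⁻¹ * (B * Qm x).trace * (w x)⁻¹) • Y x) :
    (∀ x ∈ Icc a b, (B * Phat x).trace = 0) ∧
    (∀ x ∈ Icc a b, ∀ i, HasDerivWithinAt (fun t => U t i) (U' x i) (Icc a b) x) ∧
    (∀ x ∈ Icc a b,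
      ((P x).mulVec (Y' x) + (Q x).mulVec (Y x) = lam • (R x).mulVec (Y x) ↔
        B.mulVec (U' x) + (Phat x).mulVec (U x) = lam • (Rm x).mulVec (U x))) := by
  have hBB : B * B = -1 := by subst hB; simp [one_fin_two]
  have hBdet : IsUnit B.det := by subst hB; simp [det_fin_two_of]
  have htrace : ContinuousOn (fun x => (B * Qm x).trace) (Icc a b) := by
    have hPc : ContinuousOn P (Icc a b) := continuousOn_pi.2 fun i => continuousOn_pi.2 (hP i)
    have hQ : ContinuousOn Q (Icc a b) := continuousOn_pi.2 fun i => continuousOn_pi.2 (hQc i)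
    have hPinv := hPc.matrix_inv hdet
    subst hQm
    fun_prop
  have hwne : ∀ x, w x ≠ 0 := fun x => hw ▸ Complex.exp_ne_zero _
  refine ⟨fun x _ => hPhat ▸ trace_mul_add_half_trace_smul hBB (Qm x), fun x hx i => ?_,
    fun x hx => ?_⟩
  · subst hU hU' hw
    exact (htrace.integral_hasDerivWithinAt_Icc hx0 hx).inv_cexp_mul _ (hY x hx i)
  · rw [mulVec_add_mulVec_eq_smul_mulVec_iff_mul_inv (hdet x hx) hBdet, ← congrFun hQm x,
      ← congrFun hRm x, mulVec_add_mulVec_eq_smul_mulVec_iff_gauge _ _ _ _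
        ((2 : ℂ)⁻¹ * (B * Qm x).trace) _ (hwne x)]
    subst hU hU' hPhat
    rfl

/-- a general first-order system `𝒫 Y' + 𝒬 Y = λ ℛ Y` with 𝒫 invertible is
transformed, by left multiplication with B 𝒫⁻¹ and the substitution Y = w U, into a system
`B U' + P̂ U = λ R̂ U` with tr(B P̂) ≡ 0, whose solutions correspond bijectively to those of
the original system. -/
theorem general_system_to_dirac (a b x0 : ℝ) (hx0 : x0 ∈ Icc a b) (lam : ℂ)
    (P Q R : ℝ → Matrix (Fin 2) (Fin 2) ℂ)
    (hP : ∀ i j, ContinuousOn (fun x => P x i j) (Icc a b))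
    (hQc : ∀ i j, ContinuousOn (fun x => Q x i j) (Icc a b))
    (hRc : ∀ i j, ContinuousOn (fun x => R x i j) (Icc a b))
    (hdet : ∀ x ∈ Icc a b, IsUnit (P x).det)
    (B : Matrix (Fin 2) (Fin 2) ℂ) (hB : B = !![0, 1; -1, 0])
    (Qm Rm Phat : ℝ → Matrix (Fin 2) (Fin 2) ℂ)
    (hQm : Qm = fun x => B * (P x)⁻¹ * Q x)
    (hRm : Rm = fun x => B * (P x)⁻¹ * R x)
    (hPhat : Phat = fun x => Qm x + ((2 : ℂ)⁻¹ * (B * Qm x).trace) • B)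
    (w : ℝ → ℂ)
    (hw : w = fun x => Complex.exp ((2 : ℂ)⁻¹ * ∫ s in x0..x, (B * Qm s).trace))
    (Y Y' U U' : ℝ → Fin 2 → ℂ)
    (hY : ∀ x ∈ Icc a b, ∀ i, HasDerivWithinAt (fun t => Y t i) (Y' x i) (Icc a b) x)
    (hU : U = fun x => (w x)⁻¹ • Y x)
    (hU' : U' = fun x =>
      (w x)⁻¹ • Y' x - ((2 : ℂ)⁻¹ * (B * Qm x).trace * (w x)⁻¹) • Y x) :
    (∀ x ∈ Icc a b, (B * Phat x).trace = 0) ∧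
    (∀ x ∈ Icc a b, ∀ i, HasDerivWithinAt (fun t => U t i) (U' x i) (Icc a b) x) ∧
    (∀ x ∈ Icc a b,
      ((P x).mulVec (Y' x) + (Q x).mulVec (Y x) = lam • (R x).mulVec (Y x) ↔
        B.mulVec (U' x) + (Phat x).mulVec (U x) = lam • (Rm x).mulVec (U x))) :=
  general_system_to_dirac_general a b x0 hx0 lam P Q R hP hQc hdet B hB Qm Rm Phat hQm hRm hPhat w
    hw Y Y' U U' hY hU hU'
end
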